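/- arXiv:0906.4875 — 6 statements merged into one kernel-verified Lean document; each statement's English description precedes it below -/
import Mathlib

section
/- Let X be a finite set with |X| ≥ 4 and let S be a collection of subsets of X. If S is phylogenetically decisive for X, then S satisfies the four-way partition property for X. -/
/-- A binary phylogenetic `X`-tree: a finite tree (connected acyclic simple graph)
whose degree-1 vertices (leaves) are in bijection with the label set `X`, and all of
whose non-leaf vertices have degree 3. -/
structure PhyloTree {α : Type} (X : Finset α) : Type 1 where
  V : Type
  fintypeV : Fintype V
  G : SimpleGraph V
  connected : G.Connected
  acyclic : G.IsAcyclic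
  leaf : α → V
  leaf_inj : ∀ x ∈ X, ∀ y ∈ X, leaf x = leaf y → x = y
  leaf_degree : ∀ x ∈ X, (G.neighborSet (leaf x)).ncard = 1
  degree_one_is_leaf : ∀ v : V, (G.neighborSet v).ncard = 1 → ∃ x ∈ X, leaf x = v
  internal_degree : ∀ v : V, (∀ x ∈ X, leaf x ≠ v) → (G.neighborSet v).ncard = 3

namespace PhyloTree

variable {α : Type} {X : Finset α}

/-- `T` resolves the quartet `{a,b,c,d}` as `ab|cd`: the (unique) path from the leaf
labeled `a` to the leaf labeled `b` is vertex-disjoint from the path from the leaf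
labeled `c` to the leaf labeled `d`. -/
def ResolvesAs (T : PhyloTree X) (a b c d : α) : Prop :=
  ∃ (p : T.G.Walk (T.leaf a) (T.leaf b)) (q : T.G.Walk (T.leaf c) (T.leaf d)),
    p.IsPath ∧ q.IsPath ∧ ∀ v ∈ p.support, v ∉ q.support

/-- Two binary phylogenetic `X`-trees are label-isomorphic. -/
def LabelIso (T T' : PhyloTree X) : Prop :=
  ∃ φ : T.G ≃g T'.G, ∀ x ∈ X, φ (T.leaf x) = T'.leaf x

/-- `T` and `T'` resolve the 4-element subset `q` identically. -/
def ResolveIdentically [DecidableEq α] (T T' : PhyloTree X) (q : Finset α) : Prop :=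
  ∀ a b c d : α, ({a, b, c, d} : Finset α) = q →
    (T.ResolvesAs a b c d ↔ T'.ResolvesAs a b c d)

/-- A cherry: a pair of leaves adjacent to the same vertex. -/
def IsCherry (T : PhyloTree X) (a b : α) : Prop :=
  ∃ v : T.V, T.G.Adj (T.leaf a) v ∧ T.G.Adj (T.leaf b) v

end PhyloTree

/-- `Q_S`: the set of all 4-element subsets contained in at least one member of `S`. -/
def QSet {α : Type} (S : Set (Finset α)) : Set (Finset α) :=
  {q | q.card = 4 ∧ ∃ Y ∈ S, q ⊆ Y}

/-- `S` is phylogenetically decisive for `X`: any two binary phylogenetic `X`-trees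
that resolve every quartet in `Q_S` identically are label-isomorphic. -/
def PhyloDecisive {α : Type} [DecidableEq α] (X : Finset α) (S : Set (Finset α)) : Prop :=
  ∀ T T' : PhyloTree X,
    (∀ q ∈ QSet S, PhyloTree.ResolveIdentically T T' q) → PhyloTree.LabelIso T T'

/-- `S` satisfies the four-way partition property for `X`. -/
def FourWayPartitionProperty {α : Type} [DecidableEq α] (X : Finset α)
    (S : Set (Finset α)) : Prop :=
  ∀ A1 A2 A3 A4 : Finset α,
    A1.Nonempty → A2.Nonempty → A3.Nonempty → A4.Nonempty →
    Disjoint A1 A2 → Disjoint A1 A3 → Disjoint A1 A4 →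
    Disjoint A2 A3 → Disjoint A2 A4 → Disjoint A3 A4 →
    A1 ∪ A2 ∪ A3 ∪ A4 = X →
    ∃ a1 ∈ A1, ∃ a2 ∈ A2, ∃ a3 ∈ A3, ∃ a4 ∈ A4,
      ({a1, a2, a3, a4} : Finset α) ∈ QSet S

/-- `S` is decisive for the particular tree `T`. -/
def DecisiveFor {α : Type} [DecidableEq α] {X : Finset α} (S : Set (Finset α))
    (T : PhyloTree X) : Prop :=
  ∀ T' : PhyloTree X,
    (∀ q ∈ QSet S, PhyloTree.ResolveIdentically T T' q) → PhyloTree.LabelIso T T'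

/-!
Suppose a partition `A₀, A₁, A₂, A₃` of `X` admits no transversal quartet in `Q_S`. Make each
block a caterpillar and join the four caterpillars in two ways, as `A₀A₁ | A₂A₃` and as
`A₀A₂ | A₁A₃`. Every quartet of `Q_S` has two leaves in a common block; some suffix of that
block's caterpillar meets it in exactly two leaves and is a split of both trees, so both trees
resolve it alike. Decisiveness then makes the two trees label-isomorphic, although a transversal
quartet `a₀a₁ | a₂a₃` is resolved by the first tree and not by the second.
-/

namespace SimpleGraph

variable {V : Type*} {G : SimpleGraph V}

def IsOnlyExit (G : SimpleGraph V) (U : Set V) (u v : V) : Prop :=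
  ∀ x y, G.Adj x y → x ∈ U → y ∉ U → x = u ∧ y = v

namespace IsOnlyExit

variable {U : Set V} {u v : V}

lemma compl (h : G.IsOnlyExit U u v) : G.IsOnlyExit Uᶜ v u := fun x y hxy hx hy =>
  (h y x hxy.symm (not_not.mp hy) hx).symm

lemma mem_edges (h : G.IsOnlyExit U u v) {x y : V} (p : G.Walk x y) (hx : x ∈ U) (hy : y ∉ U) :
    s(u, v) ∈ p.edges := by
  induction p with
  | nil => exact absurd hx hy
  | @cons x w y hxw p ih =>
    by_cases hw : w ∈ U
    · exact List.mem_cons_of_mem _ (ih hw hy)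
    · obtain ⟨rfl, rfl⟩ := h x w hxw hx hw
      exact List.mem_cons_self

lemma mem_support (h : G.IsOnlyExit U u v) {x y : V} (p : G.Walk x y)
    (hxy : x ∈ U ↔ y ∉ U) : u ∈ p.support := by
  by_cases hx : x ∈ U
  · exact p.fst_mem_support_of_mem_edges (h.mem_edges p hx (hxy.mp hx))
  · exact p.snd_mem_support_of_mem_edges (h.compl.mem_edges p hx (not_not.mpr (hxy.not_left.mp hx)))

/-- A path cannot leave `U` and come back, as it would use the edge `s(u, v)` twice. -/
lemma support_subset (h : G.IsOnlyExit U u v) {x y : V} {p : G.Walk x y} (hp : p.IsPath)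
    (hx : x ∈ U) (hy : y ∈ U) : ∀ z ∈ p.support, z ∈ U := by
  classical
  intro z hz
  by_contra hzU
  have hnodup := hp.isTrail.edges_nodup
  rw [← p.take_spec hz, Walk.edges_append] at hnodup
  have hout := h.mem_edges (p.takeUntil z hz) hx hzU
  have hin := h.compl.mem_edges (p.dropUntil z hz) hzU (not_not.mpr hy)
  exact List.disjoint_of_nodup_append hnodup hout (Sym2.eq_swap ▸ hin)

end IsOnlyExit

lemma ncard_neighborSet_eq_degree (v : V) [Fintype (G.neighborSet v)] :
    (G.neighborSet v).ncard = G.degree v := by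
  rw [Set.ncard_eq_toFinset_card', ← neighborFinset_def, card_neighborFinset_eq_degree]

open Finset in
/-- In a tree with `#V + 2 = 2 * #L`, the handshake count `∑ deg = 2 * #V - 2` leaves no slack
above the lower bounds `1` on `L` and `3` off `L`. -/
lemma IsTree.ncard_neighborSet_eq_ite [Fintype V] [DecidableEq V] (hG : G.IsTree)
    (L : Finset V) (hcard : Fintype.card V + 2 = 2 * #L)
    (hL : ∀ v ∈ L, 1 ≤ (G.neighborSet v).ncard) (hI : ∀ v ∉ L, 3 ≤ (G.neighborSet v).ncard)
    (v : V) : (G.neighborSet v).ncard = if v ∈ L then 1 else 3 := by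
  classical
  simp only [ncard_neighborSet_eq_degree] at hL hI ⊢
  have hle : ∀ w ∈ univ, (if w ∈ L then 1 else 3) ≤ G.degree w := by
    intro w _
    split_ifs with hw
    exacts [hL w hw, hI w hw]
  have hsum : ∑ w, (if w ∈ L then 1 else 3) = ∑ w, G.degree w := by
    have hedges := hG.card_edgeFinset
    have hcompl := card_compl L
    rw [sum_degrees_eq_twice_card_edges, sum_ite, sum_const, sum_const, smul_eq_mul,
      smul_eq_mul, filter_mem_eq_inter, univ_inter, filter_not, filter_mem_eq_inter, univ_inter,
      ← compl_eq_univ_sdiff]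
    omega
  exact ((sum_eq_sum_iff_of_le hle).mp hsum v (mem_univ v)).symm

end SimpleGraph

section ParentGraph

open SimpleGraph Finset

variable {V : Type*}

def parentGraph (parent : V → V) : SimpleGraph V :=
  SimpleGraph.fromRel fun v w => parent v = w

lemma parentGraph_isOnlyExit {parent : V → V} (P : V → Prop) {w : V} (hw : P w)
    (hP : ∀ v ≠ w, P v ↔ P (parent v)) :
    (parentGraph parent).IsOnlyExit {v | P v} w (parent w) := by
  rintro x y ⟨-, hxy | hyx⟩ hx hy
  · subst hxy
    by_cases hxw : x = w
    · exact ⟨hxw, hxw ▸ rfl⟩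
    · exact absurd ((hP x hxw).mp hx) hy
  · subst hyx
    by_cases hyw : y = w
    · exact absurd (hyw ▸ hw) hy
    · exact absurd ((hP y hyw).mpr hx) hy

structure IsParentMap (parent : V → V) (root : V) (rank : V → ℕ) : Prop where
  parent_root : parent root = root
  rank_parent_lt : ∀ v ≠ root, rank (parent v) < rank v

namespace IsParentMap

variable {parent : V → V} {root : V} {rank : V → ℕ} (h : IsParentMap parent root rank)
include h

lemma parent_ne {v : V} (hv : v ≠ root) : parent v ≠ v := fun hpv =>
  (h.rank_parent_lt v hv).ne (congrArg rank hpv)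

lemma adj_parent {v : V} (hv : v ≠ root) : (parentGraph parent).Adj v (parent v) :=
  ⟨(h.parent_ne hv).symm, Or.inl rfl⟩

lemma parent_parent_ne {v : V} (hv : v ≠ root) : parent (parent v) ≠ v := fun hv2 => by
  have hpv : parent v ≠ root := fun hpv => hv (hv2 ▸ hpv ▸ h.parent_root)
  have := h.rank_parent_lt v hv
  have := h.rank_parent_lt _ hpv
  rw [hv2] at this
  omega

lemma reachable_root (v : V) : (parentGraph parent).Reachable v root := by
  induction hr : rank v using Nat.strong_induction_on generalizing v with
  | _ r ih =>
    by_cases hv : v = root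
    · exact hv ▸ Reachable.refl v
    · exact (h.adj_parent hv).reachable.trans (ih _ (hr ▸ h.rank_parent_lt v hv) _ rfl)

lemma connected : (parentGraph parent).Connected :=
  (connected_iff _).mpr ⟨fun v w => (h.reachable_root v).trans (h.reachable_root w).symm, ⟨root⟩⟩

/-- Every edge is `s(v, parent v)` for exactly one `v ≠ root`. -/
lemma card_edgeSet_add_one [Finite V] :
    Nat.card (parentGraph parent).edgeSet + 1 = Nat.card V := by
  let toEdge : {v // v ≠ root} → (parentGraph parent).edgeSet :=
    fun v => ⟨s(v, parent v), h.adj_parent v.2⟩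
  have hbij : Function.Bijective toEdge := by
    constructor
    · rintro ⟨v, hv⟩ ⟨w, hw⟩ hvw
      rcases Sym2.eq_iff.mp (congrArg Subtype.val hvw) with ⟨hvw, -⟩ | ⟨hvw, hwv⟩
      · exact Subtype.ext hvw
      · exact absurd (hwv ▸ hvw ▸ rfl) (h.parent_parent_ne hv)
    · rintro ⟨e, he⟩
      induction e using Sym2.ind with
      | _ x y =>
      obtain ⟨hne, hxy | hyx⟩ := he
      · have hx : x ≠ root := fun hx => hne (hxy ▸ hx ▸ h.parent_root.symm)
        exact ⟨⟨x, hx⟩, Subtype.ext (by simp [toEdge, hxy])⟩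
      · have hy : y ≠ root := fun hy => hne (hyx ▸ hy ▸ h.parent_root)
        exact ⟨⟨y, hy⟩, Subtype.ext (by simp [toEdge, hyx, Sym2.eq_swap])⟩
  have hroot : Nat.card {v // v ≠ root} + 1 = Nat.card V := by
    have := Fintype.ofFinite V
    classical
    simp only [Nat.card_eq_fintype_card]
    rw [Fintype.card_subtype_compl, Fintype.card_subtype_eq]
    have := Fintype.card_pos (α := V) (h := ⟨root⟩)
    omega
  rw [← Nat.card_congr (Equiv.ofBijective toEdge hbij), hroot]

lemma isTree [Finite V] : (parentGraph parent).IsTree :=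
  isTree_iff_connected_and_card.mpr ⟨h.connected, h.card_edgeSet_add_one⟩

lemma card_add_one_le_ncard_neighborSet [Finite V] [DecidableEq V] {v : V} (hv : v ≠ root)
    (s : Finset V) (hs : ∀ c ∈ s, c ≠ v ∧ parent c = v) :
    #s + 1 ≤ ((parentGraph parent).neighborSet v).ncard := by
  have hpv : parent v ∉ s := fun hpv => h.parent_parent_ne hv (hs _ hpv).2
  rw [← Finset.card_insert_of_notMem hpv, ← Set.ncard_coe_finset]
  refine Set.ncard_le_ncard ?_ (Set.toFinite _)
  intro c hc
  rcases Finset.mem_insert.mp hc with rfl | hc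
  · exact h.adj_parent hv
  · exact ⟨(hs c hc).1.symm, Or.inr (hs c hc).2⟩

end IsParentMap

lemma card_le_ncard_neighborSet_parentGraph [Finite V] {parent : V → V} {v : V} (s : Finset V)
    (hs : ∀ c ∈ s, c ≠ v ∧ parent c = v) : #s ≤ ((parentGraph parent).neighborSet v).ncard := by
  rw [← Set.ncard_coe_finset]
  exact Set.ncard_le_ncard (fun c hc => ⟨(hs c hc).1.symm, Or.inr (hs c hc).2⟩) (Set.toFinite _)

end ParentGraph

open Finset in
/-- Raising the threshold `k` by one removes at most one element, so the count passes through
every value between `#s` and `0`. -/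
lemma Finset.exists_card_filter_le_eq {β : Type*} {s : Finset β} {f : β → ℕ} (hf : Set.InjOn f s)
    {m : ℕ} (hm : m ≤ #s) : ∃ k, #{x ∈ s | k ≤ f x} = m := by
  classical
  have hstep : ∀ k, #{x ∈ s | k ≤ f x} ≤ #{x ∈ s | k + 1 ≤ f x} + 1 := by
    intro k
    have hfiber : #{x ∈ s | f x = k} ≤ 1 :=
      card_le_one.mpr fun x hx y hy => hf (mem_filter.mp hx).1 (mem_filter.mp hy).1
        ((mem_filter.mp hx).2.trans (mem_filter.mp hy).2.symm)
    calc #{x ∈ s | k ≤ f x} ≤ #({x ∈ s | k + 1 ≤ f x} ∪ {x ∈ s | f x = k}) := by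
          refine card_le_card fun x hx => ?_
          simp only [mem_union, mem_filter] at hx ⊢
          exact (Nat.lt_or_eq_of_le hx.2).imp (fun h => ⟨hx.1, h⟩) fun h => ⟨hx.1, h.symm⟩
      _ ≤ #{x ∈ s | k + 1 ≤ f x} + 1 := (card_union_le _ _).trans (by omega)
  have hsmall : ∃ k, #{x ∈ s | k ≤ f x} ≤ m := ⟨s.sup f + 1, by
    rw [card_eq_zero.mpr (filter_eq_empty_iff.mpr fun x hx hk =>
      (Nat.lt_succ_iff.mpr (le_sup (f := f) hx)).not_ge hk)]
    exact Nat.zero_le m⟩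
  refine ⟨Nat.find hsmall, le_antisymm (Nat.find_spec hsmall) ?_⟩
  by_cases h0 : Nat.find hsmall = 0
  · simpa [h0] using hm
  · obtain ⟨k, hk⟩ := Nat.exists_eq_add_one_of_ne_zero h0
    have hprev := Nat.find_min hsmall (m := k) (by omega)
    have := hstep k
    rw [← hk] at this
    omega

structure IsBlockPartition {ι α : Type*} (X : Finset α) (A : ι → Finset α) : Prop where
  nonempty : ∀ i, (A i).Nonempty
  disjoint : Pairwise fun i j => Disjoint (A i) (A j)
  mem_iff : ∀ x, x ∈ X ↔ ∃ i, x ∈ A i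

/-- Junk when `x` lies in no block. -/
noncomputable def blockIndex {ι α : Type*} [Nonempty ι] (A : ι → Finset α) (x : α) : ι :=
  Classical.epsilon fun i => x ∈ A i

noncomputable def blockPos {ι α : Type*} [DecidableEq α] (A : ι → Finset α) (i : ι) (x : α) : ℕ :=
  (A i).toList.idxOf x

section BlockPos

open Finset

variable {ι α : Type*} [DecidableEq α] {A : ι → Finset α} {i : ι}

lemma blockPos_lt {x : α} (hx : x ∈ A i) : blockPos A i x < #(A i) := by
  simpa [blockPos] using List.idxOf_lt_length_iff.mpr (Finset.mem_toList.mpr hx)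

lemma blockPos_injOn : Set.InjOn (blockPos A i) (A i) := fun _ hx _ _ hxy =>
  (List.idxOf_inj (Finset.mem_toList.mpr hx)).mp hxy

lemma exists_blockPos_eq {j : ℕ} (hj : j < #(A i)) : ∃ x ∈ A i, blockPos A i x = j := by
  have hj' : j < (A i).toList.length := by simpa using hj
  exact ⟨(A i).toList[j], Finset.mem_toList.mp (List.getElem_mem hj'),
    (Finset.nodup_toList _).idxOf_getElem j hj'⟩

lemma blockPos_comp {ι' : Type*} (f : ι' → ι) (j : ι') : blockPos (A ∘ f) j = blockPos A (f j) :=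
  rfl

end BlockPos

namespace IsBlockPartition

open Finset

variable {ι α : Type*} {X : Finset α} {A : ι → Finset α} (hA : IsBlockPartition X A)
include hA

lemma subset (i : ι) : A i ⊆ X := fun x hx => (hA.mem_iff x).mpr ⟨i, hx⟩

lemma eq_of_mem {x : α} {i j : ι} (hi : x ∈ A i) (hj : x ∈ A j) : i = j := by
  by_contra hij
  exact disjoint_left.mp (hA.disjoint hij) hi hj

lemma mem_iff_eq {x : α} {i j : ι} (hx : x ∈ A i) : x ∈ A j ↔ i = j :=
  ⟨hA.eq_of_mem hx, fun h => h ▸ hx⟩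

lemma comp {ι' : Type*} (σ : ι' ≃ ι) : IsBlockPartition X (A ∘ σ) where
  nonempty i := hA.nonempty (σ i)
  disjoint i j hij := hA.disjoint (σ.injective.ne hij)
  mem_iff x := (hA.mem_iff x).trans ⟨fun ⟨i, hi⟩ => ⟨σ.symm i, by simpa using hi⟩,
    fun ⟨i, hi⟩ => ⟨σ i, hi⟩⟩

lemma blockIndex_eq [Nonempty ι] {x : α} {i : ι} (hx : x ∈ A i) : blockIndex A x = i :=
  hA.eq_of_mem (Classical.epsilon_spec (p := fun i => x ∈ A i) ⟨i, hx⟩) hx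

lemma exists_two_le_card_filter_or_eq_image [Fintype ι] [DecidableEq α] {q : Finset α}
    (hq : q ⊆ X) (hcard : #q = Fintype.card ι) :
    (∃ i, 2 ≤ #{x ∈ q | x ∈ A i}) ∨ ∃ a : ι → α, (∀ i, a i ∈ A i) ∧ q = univ.image a := by
  refine or_iff_not_imp_left.mpr fun hle => ?_
  push Not at hle
  have hunion : univ.biUnion (fun i => {x ∈ q | x ∈ A i}) = q := by
    ext x
    simp only [mem_biUnion, mem_univ, true_and, mem_filter]
    exact ⟨fun ⟨_, hx, _⟩ => hx, fun hx => ((hA.mem_iff x).mp (hq hx)).imp fun _ hi => ⟨hx, hi⟩⟩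
  have hsum : ∑ i, #{x ∈ q | x ∈ A i} = ∑ _i : ι, 1 := by
    rw [sum_const, card_univ, smul_eq_mul, mul_one, ← hcard, ← card_biUnion, hunion]
    exact fun i _ j _ hij => (hA.disjoint hij).mono (fun x hx => (mem_filter.mp hx).2)
      fun x hx => (mem_filter.mp hx).2
  have hone := (sum_eq_sum_iff_of_le fun i _ => Nat.le_of_lt_succ (hle i)).mp hsum
  choose a ha using fun i => card_eq_one.mp (hone i (mem_univ i))
  have hmem : ∀ i, a i ∈ q ∧ a i ∈ A i := fun i => mem_filter.mp (ha i ▸ mem_singleton_self _)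
  refine ⟨a, fun i => (hmem i).2, ext fun x => ⟨fun hx => ?_, ?_⟩⟩
  · obtain ⟨i, hi⟩ := (hA.mem_iff x).mp (hq hx)
    have hxi : x ∈ ({a i} : Finset α) := ha i ▸ mem_filter.mpr ⟨hx, hi⟩
    exact mem_image.mpr ⟨i, mem_univ i, (mem_singleton.mp hxi).symm⟩
  · intro hx
    obtain ⟨i, -, rfl⟩ := mem_image.mp hx
    exact (hmem i).1

end IsBlockPartition

lemma isBlockPartition_four {α : Type*} [DecidableEq α] {X A₀ A₁ A₂ A₃ : Finset α}
    (h₀ : A₀.Nonempty) (h₁ : A₁.Nonempty) (h₂ : A₂.Nonempty) (h₃ : A₃.Nonempty)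
    (h₀₁ : Disjoint A₀ A₁) (h₀₂ : Disjoint A₀ A₂) (h₀₃ : Disjoint A₀ A₃) (h₁₂ : Disjoint A₁ A₂)
    (h₁₃ : Disjoint A₁ A₃) (h₂₃ : Disjoint A₂ A₃) (hX : A₀ ∪ A₁ ∪ A₂ ∪ A₃ = X) :
    IsBlockPartition X ![A₀, A₁, A₂, A₃] where
  nonempty i := by fin_cases i <;> assumption
  disjoint i j hij := by
    fin_cases i <;> fin_cases j <;> first | exact absurd rfl hij | assumption | symm; assumption
  mem_iff x := by simp [← hX, Fin.exists_fin_succ]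

namespace PhyloTree

open Finset

variable {α : Type} {X : Finset α} {T T' : PhyloTree X} {C : Set α} {a b c d : α}

/-- `C | X \ C` is a split of `T`: cutting the edge `s(u, v)` separates the leaves labelled by
`C` from the others. -/
def HasSplit (T : PhyloTree X) (C : Set α) : Prop :=
  ∃ (U : Set T.V) (u v : T.V), T.G.IsOnlyExit U u v ∧ ∀ x ∈ X, T.leaf x ∈ U ↔ x ∈ C

lemma HasSplit.compl (h : T.HasSplit C) : T.HasSplit Cᶜ := by
  obtain ⟨U, u, v, hU, hleaf⟩ := h
  exact ⟨Uᶜ, v, u, hU.compl, fun x hx => (hleaf x hx).not⟩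

lemma resolvesAs_of_hasSplit (hC : T.HasSplit C) (ha : a ∈ X) (hb : b ∈ X) (hc : c ∈ X)
    (hd : d ∈ X) (haC : a ∈ C) (hbC : b ∈ C) (hcC : c ∉ C) (hdC : d ∉ C) :
    T.ResolvesAs a b c d := by
  obtain ⟨U, u, v, hU, hleaf⟩ := hC
  obtain ⟨p, hp⟩ := (T.connected.preconnected (T.leaf a) (T.leaf b)).exists_isPath
  obtain ⟨q, hq⟩ := (T.connected.preconnected (T.leaf c) (T.leaf d)).exists_isPath
  refine ⟨p, q, hp, hq, fun z hzp hzq => ?_⟩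
  have hzU := hU.support_subset hp ((hleaf a ha).mpr haC) ((hleaf b hb).mpr hbC) z hzp
  exact hU.compl.support_subset hq (mt (hleaf c hc).mp hcC) (mt (hleaf d hd).mp hdC) z hzq hzU

lemma not_resolvesAs_of_hasSplit (hC : T.HasSplit C) (ha : a ∈ X) (hb : b ∈ X) (hc : c ∈ X)
    (hd : d ∈ X) (hab : a ∈ C ↔ b ∉ C) (hcd : c ∈ C ↔ d ∉ C) : ¬T.ResolvesAs a b c d := by
  obtain ⟨U, u, v, hU, hleaf⟩ := hC
  rintro ⟨p, q, -, -, hpq⟩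
  have hleaf' : ∀ x ∈ X, ∀ y ∈ X, (x ∈ C ↔ y ∉ C) → (T.leaf x ∈ U ↔ T.leaf y ∉ U) :=
    fun x hx y hy hxy => by rw [hleaf x hx, hleaf y hy, hxy]
  exact hpq u (hU.mem_support p (hleaf' a ha b hb hab)) (hU.mem_support q (hleaf' c hc d hd hcd))

lemma resolvesAs_iff_of_hasSplit [DecidableEq α] [DecidablePred (· ∈ C)] (hC : T.HasSplit C)
    (hq : {a, b, c, d} ⊆ X) (hq4 : #{a, b, c, d} = 4) (hC2 : #{x ∈ {a, b, c, d} | x ∈ C} = 2) :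
    T.ResolvesAs a b c d ↔ (a ∈ C ↔ b ∈ C) := by
  have ha : a ∈ X := hq (by simp)
  have hb : b ∈ X := hq (by simp)
  have hc : c ∈ X := hq (by simp)
  have hd : d ∈ X := hq (by simp)
  have hcount : #{x ∈ {a, b, c, d} | x ∈ C} =
      (if a ∈ C then 1 else 0) + (if b ∈ C then 1 else 0) + (if c ∈ C then 1 else 0) +
        (if d ∈ C then 1 else 0) := by
    rw [card_filter, sum_insert, sum_insert, sum_insert, sum_singleton, ← add_assoc, ← add_assoc]
    all_goals grind
  -- `hcount` leaves the six cases with exactly two of `a, b, c, d` in `C`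
  by_cases haC : a ∈ C <;> by_cases hbC : b ∈ C <;> by_cases hcC : c ∈ C <;>
    by_cases hdC : d ∈ C <;> simp only [haC, hbC, hcC, hdC, if_true, if_false] at hcount <;>
    first
    | omega
    | exact iff_of_true (resolvesAs_of_hasSplit hC ha hb hc hd haC hbC hcC hdC) (by simp [*])
    | exact iff_of_true (resolvesAs_of_hasSplit hC.compl ha hb hc hd haC hbC
        (not_not.mpr hcC) (not_not.mpr hdC)) (by simp [*])
    | exact iff_of_false (not_resolvesAs_of_hasSplit hC ha hb hc hd (by simp [*]) (by simp [*]))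
        (by simp [*])

lemma LabelIso.resolvesAs (h : T.LabelIso T') (ha : a ∈ X) (hb : b ∈ X) (hc : c ∈ X)
    (hd : d ∈ X) (hr : T.ResolvesAs a b c d) : T'.ResolvesAs a b c d := by
  obtain ⟨φ, hφ⟩ := h
  obtain ⟨p, q, hp, hq, hpq⟩ := hr
  have hinj : Function.Injective φ.toHom := φ.injective
  refine ⟨(p.map φ.toHom).copy (hφ a ha) (hφ b hb), (q.map φ.toHom).copy (hφ c hc) (hφ d hd),
    by simpa using hp.map hinj, by simpa using hq.map hinj, ?_⟩
  simp only [SimpleGraph.Walk.support_copy, SimpleGraph.Walk.support_map, List.mem_map]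
  rintro _ ⟨v, hv, rfl⟩ ⟨w, hw, hwv⟩
  exact hpq v hv (hinj hwv ▸ hw)

/-- Some suffix of the enumeration of a block meets the quartet in exactly two leaves, and the
corresponding split of `T` and of `T'` then resolves the quartet for both trees. -/
lemma resolveIdentically_of_hasSplit_blockSuffix {ι : Type*} [DecidableEq α] {A : ι → Finset α}
    (hT : ∀ i k, T.HasSplit {x | x ∈ A i ∧ k ≤ blockPos A i x})
    (hT' : ∀ i k, T'.HasSplit {x | x ∈ A i ∧ k ≤ blockPos A i x})
    {q : Finset α} (hq : q ⊆ X) (hq4 : #q = 4) {i : ι} (hi : 2 ≤ #{x ∈ q | x ∈ A i}) :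
    T.ResolveIdentically T' q := by
  rintro a b c d rfl
  obtain ⟨k, hk⟩ := exists_card_filter_le_eq
    (blockPos_injOn.mono fun x hx => (mem_filter.mp hx).2 : Set.InjOn (blockPos A i) _) hi
  rw [filter_filter] at hk
  rw [resolvesAs_iff_of_hasSplit (hT i k) hq hq4 hk, resolvesAs_iff_of_hasSplit (hT' i k) hq hq4 hk]

end PhyloTree

namespace FourCaterpillars

open Finset

/-- Block `i` is a caterpillar with leaves `(i, j)` for `j < n i` and spine vertices `(i, j)` for
`j + 1 < n i`; the spine vertex `(i, j)` carries the leaf `(i, j)`, and the last one also the leaf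
`(i, n i - 1)`. The caterpillars of blocks 0 and 1 hang from the root `false`, those of blocks 2
and 3 from the hub `true`, itself a child of the root. -/
abbrev Vertex (n : Fin 4 → ℕ) : Type := (Σ i, Fin (n i)) ⊕ (Σ i, Fin (n i - 1)) ⊕ Bool

variable {n : Fin 4 → ℕ}

def leafV (i : Fin 4) (j : ℕ) (hj : j < n i) : Vertex n := .inl ⟨i, j, hj⟩

def spine (i : Fin 4) (j : ℕ) (hj : j + 1 < n i) : Vertex n := .inr (.inl ⟨i, j, by omega⟩)

def root : Vertex n := .inr (.inr false)

def hub (i : Fin 4) : Vertex n := .inr (.inr (decide (2 ≤ i)))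

def up (i : Fin 4) (j : ℕ) : Vertex n :=
  if h : 0 < j ∧ j < n i then spine i (j - 1) (by omega) else hub i

def parent : Vertex n → Vertex n
  | .inl ⟨i, j⟩ => if h : (j : ℕ) + 1 < n i then spine i j h else up i j
  | .inr (.inl ⟨i, j⟩) => up i j
  | .inr (.inr _) => root

def rank : Vertex n → ℕ
  | .inl ⟨i, _⟩ => n i + 2
  | .inr (.inl ⟨_, j⟩) => j + 2
  | .inr (.inr b) => b.toNat

/-- The top of the part of the caterpillar of block `i` holding the leaves `(i, j')`, `j ≤ j'`. -/
def top (i : Fin 4) (j : ℕ) (hj : j < n i) : Vertex n :=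
  if h : j + 1 < n i then spine i j h else leafV i j hj

abbrev graph (n : Fin 4 → ℕ) : SimpleGraph (Vertex n) := parentGraph parent

lemma rank_up_lt {i : Fin 4} {j : ℕ} : rank (up (n := n) i j) < j + 2 := by
  unfold up hub
  split_ifs
  · simp only [spine, rank]
    omega
  · cases decide (2 ≤ i) <;> simp [rank]

lemma isParentMap : IsParentMap (parent (n := n)) root rank where
  parent_root := rfl
  rank_parent_lt := by
    rintro (⟨i, j, hj⟩ | ⟨i, j, hj⟩ | _ | _) hv
    · simp only [parent]
      split_ifs
      · simp only [spine, rank]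
        omega
      · exact rank_up_lt.trans (by simp only [rank]; omega)
    · exact rank_up_lt
    · exact absurd rfl hv
    · simp [rank, parent, root]

lemma parent_top {i : Fin 4} {j : ℕ} (hj : j < n i) : parent (top i j hj) = up i j := by
  unfold top
  split_ifs with h
  · rfl
  · simp [leafV, parent, h]

lemma parent_leafV {i : Fin 4} {j : ℕ} (hj : j + 1 < n i) :
    parent (leafV i j (by omega)) = spine i j hj := by
  simp [leafV, parent, hj]

lemma top_ne_top {i i' : Fin 4} {j j' : ℕ} (hj : j < n i) (hj' : j' < n i') (hii' : i ≠ i') :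
    top i j hj ≠ top i' j' hj' := by
  unfold top
  split_ifs <;> simp [spine, leafV, hii']

lemma three_le_ncard_neighborSet_spine {i : Fin 4} {j : ℕ} (hj : j + 1 < n i) :
    3 ≤ ((graph n).neighborSet (spine i j hj)).ncard := by
  have hchildren : ∀ c ∈ ({leafV i j (by omega), top i (j + 1) hj} : Finset (Vertex n)),
      c ≠ spine i j hj ∧ parent c = spine i j hj := by
    simp only [mem_insert, mem_singleton]
    rintro c (rfl | rfl)
    · exact ⟨by simp [leafV, spine], parent_leafV hj⟩
    · refine ⟨?_, by simp [parent_top, up, hj]⟩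
      unfold top
      split_ifs <;> simp [spine, leafV]
  have hne : leafV i j (by omega) ≠ top i (j + 1) hj := by
    unfold top
    split_ifs <;> simp [spine, leafV]
  simpa [card_pair hne] using
    isParentMap.card_add_one_le_ncard_neighborSet (by simp [spine, root]) _ hchildren

lemma top_ne_inr_inr {i : Fin 4} {j : ℕ} (hj : j < n i) (b : Bool) :
    top i j hj ≠ .inr (.inr b) := by
  unfold top
  split_ifs <;> simp [spine, leafV]

lemma parent_top_zero {i : Fin 4} (hi : 0 < n i) : parent (top i 0 hi) = hub i := by
  simp [parent_top, up]

lemma three_le_ncard_neighborSet_upperHub (h2 : 0 < n 2) (h3 : 0 < n 3) :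
    3 ≤ ((graph n).neighborSet (.inr (.inr true))).ncard := by
  have hchildren : ∀ c ∈ ({top 2 0 h2, top 3 0 h3} : Finset (Vertex n)),
      c ≠ .inr (.inr true) ∧ parent c = .inr (.inr true) := by
    simp only [mem_insert, mem_singleton]
    rintro c (rfl | rfl) <;> exact ⟨top_ne_inr_inr _ _, by simp [parent_top_zero, hub]⟩
  simpa [card_pair (top_ne_top h2 h3 (by decide))] using
    isParentMap.card_add_one_le_ncard_neighborSet (by simp [root]) _ hchildren

lemma three_le_ncard_neighborSet_root (h0 : 0 < n 0) (h1 : 0 < n 1) :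
    3 ≤ ((graph n).neighborSet root).ncard := by
  have hchildren : ∀ c ∈ ({.inr (.inr true), top 0 0 h0, top 1 0 h1} : Finset (Vertex n)),
      c ≠ root ∧ parent c = root := by
    simp only [mem_insert, mem_singleton]
    rintro c (rfl | rfl | rfl)
    · simp [root, parent]
    all_goals exact ⟨top_ne_inr_inr _ _, by simp [parent_top_zero, hub, root]⟩
  have hcard : #({.inr (.inr true), top 0 0 h0, top 1 0 h1} : Finset (Vertex n)) = 3 := by
    rw [card_insert_of_notMem, card_pair (top_ne_top h0 h1 (by decide))]
    simp only [mem_insert, mem_singleton, not_or]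
    exact ⟨(top_ne_inr_inr _ _).symm, (top_ne_inr_inr _ _).symm⟩
  simpa [hcard] using card_le_ncard_neighborSet_parentGraph _ hchildren

def leaves (n : Fin 4 → ℕ) : Finset (Vertex n) := univ.map ⟨Sum.inl, Sum.inl_injective⟩

lemma ncard_neighborSet (hn : ∀ i, 0 < n i) (v : Vertex n) :
    ((graph n).neighborSet v).ncard = if v ∈ leaves n then 1 else 3 := by
  refine isParentMap.isTree.ncard_neighborSet_eq_ite _ ?_ ?_ ?_ v
  · have := hn 0; have := hn 1; have := hn 2; have := hn 3
    simp only [leaves, card_map, card_univ, Fintype.card_sum, Fintype.card_sigma, Fintype.card_fin,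
      Fintype.card_bool, Fin.sum_univ_four]
    omega
  · intro w hw
    obtain ⟨l, -, rfl⟩ := mem_map.mp hw
    simpa using isParentMap.card_add_one_le_ncard_neighborSet (by simp [root]) ∅ (by simp)
  · rintro (l | ⟨i, j, hj⟩ | _ | _) hw
    · exact absurd (mem_map_of_mem _ (mem_univ l)) hw
    · exact three_le_ncard_neighborSet_spine (i := i) (j := j) (by omega)
    · exact three_le_ncard_neighborSet_root (hn 0) (hn 1)
    · exact three_le_ncard_neighborSet_upperHub (hn 2) (hn 3)

def InSuffix (i : Fin 4) (k : ℕ) : Vertex n → Prop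
  | .inl ⟨i', j⟩ => i' = i ∧ k ≤ j
  | .inr (.inl ⟨i', j⟩) => i' = i ∧ k ≤ j
  | .inr (.inr _) => False

lemma inSuffix_up {i i' : Fin 4} {k j : ℕ} (hj : j < n i') :
    InSuffix i k (up (n := n) i' j) ↔ i' = i ∧ k < j := by
  unfold up
  split_ifs with h
  · simp only [spine, InSuffix]
    omega
  · simp only [hub, InSuffix, false_iff, not_and]
    omega

lemma isOnlyExit_inSuffix (i : Fin 4) {k : ℕ} (hk : k < n i) :
    (graph n).IsOnlyExit {v | InSuffix i k v} (top i k hk) (parent (top i k hk)) := by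
  refine parentGraph_isOnlyExit _ (by unfold top; split_ifs <;> simp [spine, leafV, InSuffix]) ?_
  rintro (⟨i', j, hj⟩ | ⟨i', j, hj⟩ | b) hv
  · simp only [parent]
    split_ifs with h
    · simp [spine, InSuffix]
    · have : ¬(i' = i ∧ j = k) := by
        rintro ⟨rfl, rfl⟩
        exact hv (by simp [top, h, leafV])
      rw [inSuffix_up hj]
      simp only [InSuffix]
      omega
  · have : ¬(i' = i ∧ j = k) := by
      rintro ⟨rfl, rfl⟩
      exact hv (by simp [top, spine, show (j : ℕ) + 1 < n i' by omega])
    rw [show parent _ = up i' j from rfl, inSuffix_up (show (j : ℕ) < n i' by omega)]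
    simp only [InSuffix]
    omega
  · simp [parent, root, InSuffix]

def InUpperHalf : Vertex n → Prop
  | .inl ⟨i, _⟩ => 2 ≤ i
  | .inr (.inl ⟨i, _⟩) => 2 ≤ i
  | .inr (.inr b) => b

lemma inUpperHalf_up {i : Fin 4} {j : ℕ} : InUpperHalf (up (n := n) i j) ↔ 2 ≤ i := by
  unfold up
  split_ifs <;> simp [spine, hub, InUpperHalf]

lemma isOnlyExit_inUpperHalf :
    (graph n).IsOnlyExit {v | InUpperHalf v} (.inr (.inr true)) root := by
  refine parentGraph_isOnlyExit _ rfl ?_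
  rintro (⟨i, j, hj⟩ | ⟨i, j, hj⟩ | _ | _) hv
  · simp only [parent]
    split_ifs
    · simp [spine, InUpperHalf]
    · rw [inUpperHalf_up]
      rfl
  · rw [show parent _ = up i j from rfl, inUpperHalf_up]
    rfl
  · simp [parent, root, InUpperHalf]
  · exact absurd rfl hv

variable {α : Type} [DecidableEq α] {X : Finset α} {A : Fin 4 → Finset α}

noncomputable def leafOf (A : Fin 4 → Finset α) (x : α) : Vertex fun i => #(A i) :=
  if hx : x ∈ A (blockIndex A x) then leafV _ _ (blockPos_lt hx) else root

lemma leafOf_eq (hA : IsBlockPartition X A) {x : α} {i : Fin 4} (hx : x ∈ A i) :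
    leafOf A x = leafV i (blockPos A i x) (blockPos_lt hx) := by
  obtain rfl := hA.blockIndex_eq hx
  rw [leafOf, dif_pos hx]

lemma exists_leafOf_eq (hA : IsBlockPartition X A) (l : Σ i, Fin #(A i)) :
    ∃ x ∈ X, leafOf A x = .inl l := by
  obtain ⟨i, j, hj⟩ := l
  obtain ⟨x, hx, rfl⟩ := exists_blockPos_eq hj
  exact ⟨x, hA.subset i hx, leafOf_eq hA hx⟩

/-- The tree `((A 0, A 1), (A 2, A 3))` in which every block is a caterpillar. -/
noncomputable def phyloTree (hA : IsBlockPartition X A) : PhyloTree X where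
  V := Vertex fun i => #(A i)
  fintypeV := inferInstance
  G := graph _
  connected := isParentMap.connected
  acyclic := isParentMap.isTree.isAcyclic
  leaf := leafOf A
  leaf_inj x hx y hy hxy := by
    obtain ⟨i, hi⟩ := (hA.mem_iff x).mp hx
    obtain ⟨i', hi'⟩ := (hA.mem_iff y).mp hy
    rw [leafOf_eq hA hi, leafOf_eq hA hi'] at hxy
    simp only [leafV, Sum.inl.injEq, Sigma.mk.injEq] at hxy
    obtain ⟨rfl, hpos⟩ := hxy
    exact blockPos_injOn hi hi' (Fin.mk.inj_iff.mp (eq_of_heq hpos))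
  leaf_degree x hx := by
    obtain ⟨i, hi⟩ := (hA.mem_iff x).mp hx
    rw [leafOf_eq hA hi, ncard_neighborSet fun i => (hA.nonempty i).card_pos]
    simp [leaves, leafV]
  degree_one_is_leaf v hv := by
    rw [ncard_neighborSet fun i => (hA.nonempty i).card_pos] at hv
    split_ifs at hv with hl
    · obtain ⟨l, -, rfl⟩ := mem_map.mp hl
      exact exists_leafOf_eq hA l
    · omega
  internal_degree v hv := by
    rw [ncard_neighborSet fun i => (hA.nonempty i).card_pos, if_neg]
    intro hl
    obtain ⟨l, -, rfl⟩ := mem_map.mp hl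
    obtain ⟨x, hx, hxl⟩ := exists_leafOf_eq hA l
    exact hv x hx hxl

lemma hasSplit_blockSuffix (hA : IsBlockPartition X A) (i : Fin 4) (k : ℕ) :
    (phyloTree hA).HasSplit {x | x ∈ A i ∧ k ≤ blockPos A i x} := by
  by_cases hk : k < #(A i)
  · refine ⟨_, _, _, isOnlyExit_inSuffix i hk, fun x hx => ?_⟩
    obtain ⟨i', hi'⟩ := (hA.mem_iff x).mp hx
    change InSuffix i k (leafOf A x) ↔ _
    rw [leafOf_eq hA hi', Set.mem_ofPred_eq, hA.mem_iff_eq hi']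
    simp only [leafV, InSuffix]
    constructor <;> rintro ⟨rfl, h⟩ <;> exact ⟨rfl, h⟩
  · refine ⟨∅, root, root, fun _ _ _ h => absurd h (Set.notMem_empty _), fun x _ => ?_⟩
    simp only [Set.mem_empty_iff_false, Set.mem_ofPred_eq, false_iff, not_and]
    exact fun hx => by have := blockPos_lt hx; omega

lemma hasSplit_upperHalf (hA : IsBlockPartition X A) :
    (phyloTree hA).HasSplit {x | x ∈ A 2 ∨ x ∈ A 3} := by
  refine ⟨_, _, _, isOnlyExit_inUpperHalf, fun x hx => ?_⟩
  obtain ⟨i, hi⟩ := (hA.mem_iff x).mp hx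
  change InUpperHalf (leafOf A x) ↔ _
  rw [leafOf_eq hA hi, Set.mem_ofPred_eq, hA.mem_iff_eq hi, hA.mem_iff_eq hi]
  simp only [leafV, InUpperHalf]
  fin_cases i <;> decide

/-- Leaves `a i ∈ A i` are resolved as `a 0 a 1 | a 2 a 3` in the first tree, but not in the
second, whose split `A 0 ∪ A 2 | A 1 ∪ A 3` separates both pairs. -/
lemma not_labelIso_comp_swap (hA : IsBlockPartition X A) :
    ¬(phyloTree hA).LabelIso (phyloTree (hA.comp (Equiv.swap 1 2))) := by
  intro hiso
  choose a ha using hA.nonempty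
  have haX : ∀ i, a i ∈ X := fun i => hA.subset i (ha i)
  have hmem : ∀ i j, a i ∈ A j ↔ i = j := fun i _ => hA.mem_iff_eq (ha i)
  have hres := PhyloTree.resolvesAs_of_hasSplit (hasSplit_upperHalf hA).compl
    (haX 0) (haX 1) (haX 2) (haX 3) (by simp [hmem]) (by simp [hmem]) (by simp [hmem])
    (by simp [hmem])
  refine PhyloTree.not_resolvesAs_of_hasSplit (hasSplit_upperHalf (hA.comp (Equiv.swap 1 2)))
    (haX 0) (haX 1) (haX 2) (haX 3) ?_ ?_ (hiso.resolvesAs (haX 0) (haX 1) (haX 2) (haX 3) hres)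
  all_goals simp [hmem, Equiv.swap_apply_of_ne_of_ne]

end FourCaterpillars

theorem fourWayPartitionProperty_of_decisive_general {α : Type} [DecidableEq α]
    (X : Finset α)
    (S : Set (Finset α)) (hS : ∀ Y ∈ S, Y ⊆ X)
    (hdec : PhyloDecisive X S) :
    FourWayPartitionProperty X S := by
  intro A₀ A₁ A₂ A₃ h₀ h₁ h₂ h₃ h₀₁ h₀₂ h₀₃ h₁₂ h₁₃ h₂₃ hX
  by_contra! hnone
  have hA := isBlockPartition_four h₀ h₁ h₂ h₃ h₀₁ h₀₂ h₀₃ h₁₂ h₁₃ h₂₃ hX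
  let σ := Equiv.swap (1 : Fin 4) 2
  refine FourCaterpillars.not_labelIso_comp_swap hA (hdec _ _ fun q ⟨hq4, Y, hY, hqY⟩ => ?_)
  have hqX : q ⊆ X := hqY.trans (hS Y hY)
  rcases hA.exists_two_le_card_filter_or_eq_image hqX (by simpa using hq4) with
    ⟨i, hi⟩ | ⟨a, ha, rfl⟩
  · refine PhyloTree.resolveIdentically_of_hasSplit_blockSuffix
      (FourCaterpillars.hasSplit_blockSuffix hA) (fun i k => ?_) hqX hq4 hi
    simpa [σ, blockPos_comp] using FourCaterpillars.hasSplit_blockSuffix (hA.comp σ) (σ i) k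
  · have hq : ({a 0, a 1, a 2, a 3} : Finset α) = Finset.univ.image a := by simp [Fin.univ_succ]
    exact (hnone (a 0) (ha 0) (a 1) (ha 1) (a 2) (ha 2) (a 3) (ha 3) (hq ▸ ⟨hq4, Y, hY, hqY⟩)).elim

/-- if `S` is phylogenetically decisive for `X` then `S` satisfies the
four-way partition property for `X`. -/
theorem fourWayPartitionProperty_of_decisive {α : Type} [DecidableEq α]
    (X : Finset α) (hX : 4 ≤ X.card)
    (S : Set (Finset α)) (hS : ∀ Y ∈ S, Y ⊆ X)
    (hdec : PhyloDecisive X S) :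
    FourWayPartitionProperty X S :=
  fourWayPartitionProperty_of_decisive_general X S hS hdec
end

section
/- Let X be a finite set with |X| ≥ 4 and let S be a collection of subsets of X. If S satisfies the four-way partition property for X, then S is phylogenetically decisive for X. -/
namespace SimpleGraph

variable {V : Type*} {G : SimpleGraph V} {u v w a b c d m n p q x y z : V}

/-- The vertices that every `u`–`v` walk passes through; in a tree, the vertex set of the
`u`–`v` path (`IsAcyclic.mem_interval_iff`). -/
def interval (G : SimpleGraph V) (u v : V) : Set V := {z | ∀ r : G.Walk u v, z ∈ r.support}

lemma left_mem_interval : u ∈ G.interval u v := fun r => r.start_mem_support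

lemma right_mem_interval : v ∈ G.interval u v := fun r => r.end_mem_support

lemma interval_comm (u v : V) : G.interval u v = G.interval v u := by
  ext z
  exact ⟨fun h r => by simpa using h r.reverse, fun h r => by simpa using h r.reverse⟩

lemma interval_self (u : V) : G.interval u u = {u} :=
  Set.eq_singleton_iff_unique_mem.2 ⟨left_mem_interval, fun _ h => by simpa using h .nil⟩

lemma interval_subset_interval_left (h : w ∈ G.interval u v) :
    G.interval u w ⊆ G.interval u v := by
  classical
  exact fun z hz r => r.support_takeUntil_subset_support (h r) (hz _)

lemma interval_subset_interval_right (h : w ∈ G.interval u v) :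
    G.interval w v ⊆ G.interval u v := by
  rw [interval_comm w v, interval_comm u v]
  exact interval_subset_interval_left (by rwa [interval_comm])

lemma IsAcyclic.mem_interval_iff (hG : G.IsAcyclic) {r : G.Walk u v} (hr : r.IsPath) :
    z ∈ G.interval u v ↔ z ∈ r.support := by
  classical
  refine ⟨fun h => h r, fun h r' => r'.support_bypass_subset_support ?_⟩
  obtain rfl : r = r'.bypass :=
    congrArg Subtype.val ((hG.subsingleton_path u v).elim ⟨r, hr⟩ ⟨r'.bypass, r'.bypass_isPath⟩)
  exact h

namespace IsTree

lemma interval_subset_union (hG : G.IsTree) (w : V) :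
    G.interval u v ⊆ G.interval u w ∪ G.interval w v := by
  obtain ⟨r, hr⟩ := (hG.existsUnique_path u w).exists
  obtain ⟨r', hr'⟩ := (hG.existsUnique_path w v).exists
  intro z hz
  have := hz (r.append r')
  rw [Walk.mem_support_append_iff] at this
  exact this.imp (hG.isAcyclic.mem_interval_iff hr).2 (hG.isAcyclic.mem_interval_iff hr').2

lemma notMem_interval_trans (hG : G.IsTree) (hab : m ∉ G.interval a b)
    (hbc : m ∉ G.interval b c) : m ∉ G.interval a c :=
  fun h => (hG.interval_subset_union b h).elim hab hbc

lemma eq_of_mem_interval (hG : G.IsTree) (ha : a ∈ G.interval b c) (hb : b ∈ G.interval a c) :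
    a = b := by
  obtain ⟨r, hr⟩ := (hG.existsUnique_path b c).exists
  obtain ⟨r₁, r₂, rfl⟩ := Walk.mem_support_iff_exists_append.1 (ha r)
  by_contra hne
  exact hr.ne_of_mem_support_of_append (Ne.symm hne) r₁.start_mem_support
    ((hG.isAcyclic.mem_interval_iff hr.of_append_right).1 hb) rfl

lemma mem_interval_of_mem_interval (hG : G.IsTree) (hu : u ∈ G.interval a w)
    (hz : z ∈ G.interval a u) : u ∈ G.interval z w := by
  by_contra h
  rcases hG.interval_subset_union z hu with h' | h'
  · rw [interval_comm] at hz h'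
    exact h (hG.eq_of_mem_interval hz h' ▸ left_mem_interval)
  · exact h h'

lemma interval_subset_interval (hG : G.IsTree) (hu : u ∈ G.interval a b)
    (hv : v ∈ G.interval a b) : G.interval u v ⊆ G.interval a b := by
  rcases hG.interval_subset_union v hu with h | h
  · exact (interval_subset_interval_right h).trans (interval_subset_interval_left hv)
  · rw [interval_comm u]
    exact (interval_subset_interval_left h).trans (interval_subset_interval_right hv)

lemma mem_or_mem_of_adj (hG : G.IsTree) (h : G.Adj u n) (v : V) :
    u ∈ G.interval n v ∨ n ∈ G.interval u v := by
  obtain ⟨r, hr⟩ := (hG.existsUnique_path n v).exists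
  by_cases hu : u ∈ r.support
  · exact .inl ((hG.isAcyclic.mem_interval_iff hr).2 hu)
  · exact .inr ((hG.isAcyclic.mem_interval_iff (hr.cons hu (h := h))).2 (by simp))

lemma exists_adj_mem_interval (hG : G.IsTree) (h : u ≠ v) :
    ∃ n, G.Adj u n ∧ n ∈ G.interval u v := by
  obtain ⟨r, hr⟩ := (hG.existsUnique_path u v).exists
  have hr' : ¬ r.Nil := Walk.not_nil_of_ne h
  exact ⟨r.snd, r.adj_snd hr', (hG.isAcyclic.mem_interval_iff hr).2
    (List.mem_of_mem_tail (r.snd_mem_tail_support hr'))⟩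

lemma subsingleton_neighborSet_inter_interval (hG : G.IsTree) (u v : V) :
    (G.neighborSet u ∩ G.interval u v).Subsingleton := by
  obtain ⟨r, hr⟩ := (hG.existsUnique_path u v).exists
  rintro n₁ ⟨h₁, hn₁⟩ n₂ ⟨h₂, hn₂⟩
  rw [hG.isAcyclic.eq_snd_of_adj_start hr h₁ (hn₁ r),
    hG.isAcyclic.eq_snd_of_adj_start hr h₂ (hn₂ r)]

/-- In a tree, `v ∉ G.interval a b` says that `a` and `b` lie in the same branch at `v`, the
branch of `a` being entered through the neighbour of `v` towards `a`. -/
lemma adj_mem_interval_iff (hG : G.IsTree) (hn : G.Adj v n) (ha : n ∈ G.interval v a) :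
    n ∈ G.interval v b ↔ v ∉ G.interval a b := by
  have away : ∀ {c}, n ∈ G.interval v c → v ∉ G.interval n c :=
    fun hc hv => hn.ne (hG.eq_of_mem_interval hv hc)
  refine ⟨fun hb => hG.notMem_interval_trans ?_ (away hb), fun hab => ?_⟩
  · rw [interval_comm]
    exact away ha
  · exact (hG.mem_or_mem_of_adj hn b).resolve_left (hG.notMem_interval_trans (away ha) hab)

lemma eq_or_eq_of_mem_interval (hG : G.IsTree) (hz : (G.neighborSet z).Subsingleton)
    (h : z ∈ G.interval u v) : z = u ∨ z = v := by
  by_contra! hne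
  obtain ⟨n, hn, hnu⟩ := hG.exists_adj_mem_interval hne.1
  obtain ⟨n', hn', hnv⟩ := hG.exists_adj_mem_interval hne.2
  exact (hG.adj_mem_interval_iff hn hnu).1 (hz hn' hn ▸ hnv) h

lemma adj_iff (hG : G.IsTree) : G.Adj u v ↔ u ≠ v ∧ G.interval u v ⊆ {u, v} := by
  refine ⟨fun h => ⟨h.ne, fun z hz => by simpa using hz (.cons h .nil)⟩, fun ⟨hne, hsub⟩ => ?_⟩
  obtain ⟨n, hn, hnI⟩ := hG.exists_adj_mem_interval hne
  rcases hsub hnI with rfl | rfl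
  · exact absurd hn G.irrefl
  · exact hn

lemma exists_median (hG : G.IsTree) (x y z : V) :
    ∃ m, m ∈ G.interval x y ∧ m ∈ G.interval x z ∧ m ∈ G.interval y z := by
  suffices h : ∀ {z x} (r : G.Walk z x), r.IsPath →
      ∃ m ∈ G.interval x y, m ∈ G.interval z x ∧ m ∈ G.interval z y by
    obtain ⟨r, hr⟩ := (hG.existsUnique_path z x).exists
    obtain ⟨m, hxy, hzx, hzy⟩ := h r hr
    exact ⟨m, hxy, by rwa [interval_comm], by rwa [interval_comm]⟩
  intro z x r hr
  induction r with
  | nil => exact ⟨_, left_mem_interval, left_mem_interval, left_mem_interval⟩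
  | @cons z w x h r ih =>
    obtain ⟨m, hxy, hwx, hwy⟩ := ih hr.of_cons
    by_cases hz : z ∈ G.interval x y
    · exact ⟨z, hz, left_mem_interval, left_mem_interval⟩
    -- `z` steps towards both `x` and `y` through `w`
    have hzw : z ∉ G.interval w x := fun h' =>
      ((Walk.cons_isPath_iff _ _).1 hr).2 ((hG.isAcyclic.mem_interval_iff hr.of_cons).1 h')
    have hwx' := (hG.mem_or_mem_of_adj h x).resolve_left hzw
    have hwy' := (hG.mem_or_mem_of_adj h y).resolve_left (hG.notMem_interval_trans hzw hz)
    exact ⟨m, hxy, interval_subset_interval_right hwx' hwx,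
      interval_subset_interval_right hwy' hwy⟩

lemma disjoint_interval_of_separates (hG : G.IsTree) (ha : u ∈ G.interval a w)
    (hb : u ∈ G.interval b w) (hc : u ∉ G.interval c w) (hd : u ∉ G.interval d w) :
    Disjoint (G.interval a b) (G.interval c d) := by
  rw [Set.disjoint_left]
  intro z hab hcd
  have far : u ∈ G.interval z w := by
    rcases hG.interval_subset_union u hab with h | h
    · exact hG.mem_interval_of_mem_interval ha h
    · rw [interval_comm] at h
      exact hG.mem_interval_of_mem_interval hb h
  have hdc : u ∉ G.interval d c := hG.notMem_interval_trans hd (by rwa [interval_comm])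
  rw [interval_comm] at hcd
  exact hG.notMem_interval_trans (fun h => hdc (interval_subset_interval_right hcd h)) hc far

lemma disjoint_interval_iff_notMem (hG : G.IsTree) (hab : m ∈ G.interval a b)
    (hac : m ∈ G.interval a c) (hbc : m ∈ G.interval b c) :
    Disjoint (G.interval p a) (G.interval b c) ↔ m ∉ G.interval p a := by
  refine ⟨fun h hm => Set.disjoint_left.1 h hm hbc, fun hm => ?_⟩
  have hma : m ∉ G.interval a a := by
    rw [interval_self]
    exact fun h => hm (h ▸ right_mem_interval)
  rw [interval_comm] at hab hac
  exact (hG.disjoint_interval_of_separates hab hac hm hma).symm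

lemma notMem_interval_of_encard_le_three (hG : G.IsTree) (hm : (G.neighborSet m).encard ≤ 3)
    (hx : x ≠ m) (hy : y ≠ m) (hz : z ≠ m) (hxy : m ∈ G.interval x y)
    (hxz : m ∈ G.interval x z) (hyz : m ∈ G.interval y z) (hp : p ≠ m) :
    m ∉ G.interval p x ∨ m ∉ G.interval p y ∨ m ∉ G.interval p z := by
  obtain ⟨nx, hnx, hnxI⟩ := hG.exists_adj_mem_interval hx.symm
  obtain ⟨ny, hny, hnyI⟩ := hG.exists_adj_mem_interval hy.symm
  obtain ⟨nz, hnz, hnzI⟩ := hG.exists_adj_mem_interval hz.symm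
  obtain ⟨np, hnp, hnpI⟩ := hG.exists_adj_mem_interval hp.symm
  have hne : ∀ {n n' c c'}, G.Adj m n → n ∈ G.interval m c → n' ∈ G.interval m c' →
      m ∈ G.interval c c' → n ≠ n' :=
    fun h hc hc' hcc' heq => (hG.adj_mem_interval_iff h hc).1 (heq ▸ hc') hcc'
  -- the neighbours of `m` towards `x`, `y`, `z` are distinct, so they are all its neighbours
  have hall : {nx, ny, nz} = G.neighborSet m := by
    refine (Set.toFinite _).eq_of_subset_of_encard_le ?_ (hm.trans (Set.encard_eq_three.2
      ⟨nx, ny, nz, hne hnx hnxI hnyI hxy, hne hnx hnxI hnzI hxz, hne hny hnyI hnzI hyz, rfl⟩).ge)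
    rintro n (rfl | rfl | rfl) <;> assumption
  have hmem : np ∈ ({nx, ny, nz} : Set V) := hall ▸ hnp
  rw [← interval_comm x, ← interval_comm y, ← interval_comm z]
  rcases hmem with rfl | rfl | rfl
  · exact .inl ((hG.adj_mem_interval_iff hnp hnxI).1 hnpI)
  · exact .inr (.inl ((hG.adj_mem_interval_iff hnp hnyI).1 hnpI))
  · exact .inr (.inr ((hG.adj_mem_interval_iff hnp hnzI).1 hnpI))

lemma notMem_interval_iff_of_encard_le_three (hG : G.IsTree)
    (hm : (G.neighborSet m).encard ≤ 3) (hx : x ≠ m) (hy : y ≠ m) (hz : z ≠ m)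
    (hxy : m ∈ G.interval x y) (hxz : m ∈ G.interval x z) (hyz : m ∈ G.interval y z)
    (hp : p ≠ m) : m ∉ G.interval p q ↔ (m ∉ G.interval p x ∧ m ∉ G.interval q x) ∨
      (m ∉ G.interval p y ∧ m ∉ G.interval q y) ∨ (m ∉ G.interval p z ∧ m ∉ G.interval q z) := by
  refine ⟨fun hpq => ?_, ?_⟩
  · have both : ∀ {t}, m ∉ G.interval p t → m ∉ G.interval p t ∧ m ∉ G.interval q t :=
      fun h => ⟨h, hG.notMem_interval_trans (by rwa [interval_comm]) h⟩
    exact (hG.notMem_interval_of_encard_le_three hm hx hy hz hxy hxz hyz hp).imp both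
      (Or.imp both both)
  · rintro (⟨h, h'⟩ | ⟨h, h'⟩ | ⟨h, h'⟩) <;>
      exact hG.notMem_interval_trans h (by rwa [interval_comm])

lemma exists_adj_notMem_interval (hG : G.IsTree) (hu : 2 < (G.neighborSet u).encard)
    (a b : V) : ∃ n, G.Adj u n ∧ n ∉ G.interval u a ∧ n ∉ G.interval u b := by
  by_contra! h
  have hsub : G.neighborSet u ⊆
      (G.neighborSet u ∩ G.interval u a) ∪ (G.neighborSet u ∩ G.interval u b) := by
    intro n hn
    by_cases hna : n ∈ G.interval u a
    · exact .inl ⟨hn, hna⟩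
    · exact .inr ⟨hn, h n hn hna⟩
  have : (G.neighborSet u).encard ≤ 1 + 1 :=
    (Set.encard_mono hsub).trans ((Set.encard_union_le _ _).trans (add_le_add
      (Set.encard_le_one_iff_subsingleton.2 (hG.subsingleton_neighborSet_inter_interval u a))
      (Set.encard_le_one_iff_subsingleton.2 (hG.subsingleton_neighborSet_inter_interval u b))))
  exact absurd (hu.trans_le this) (by norm_num)

end IsTree

end SimpleGraph

lemma FourWayPartitionProperty.exists_quartet_of_predicates {α : Type} [DecidableEq α]
    {X : Finset α} {S : Set (Finset α)} (hfour : FourWayPartitionProperty X S) (P R : α → Prop)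
    {a b c d : α} (ha : a ∈ X) (hb : b ∈ X) (hc : c ∈ X) (hd : d ∈ X)
    (h₁ : P a ∧ R a) (h₂ : P b ∧ ¬ R b) (h₃ : ¬ P c ∧ R c) (h₄ : ¬ P d ∧ ¬ R d) :
    ∃ x₁ x₂ x₃ x₄, (P x₁ ∧ R x₁) ∧ (P x₂ ∧ ¬ R x₂) ∧ (¬ P x₃ ∧ R x₃) ∧ (¬ P x₄ ∧ ¬ R x₄) ∧
      ({x₁, x₂, x₃, x₄} : Finset α) ∈ QSet S := by
  classical
  obtain ⟨x₁, hx₁, x₂, hx₂, x₃, hx₃, x₄, hx₄, hq⟩ := hfour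
    (X.filter fun x => P x ∧ R x) (X.filter fun x => P x ∧ ¬ R x)
    (X.filter fun x => ¬ P x ∧ R x) (X.filter fun x => ¬ P x ∧ ¬ R x)
    ⟨a, Finset.mem_filter.2 ⟨ha, h₁⟩⟩ ⟨b, Finset.mem_filter.2 ⟨hb, h₂⟩⟩
    ⟨c, Finset.mem_filter.2 ⟨hc, h₃⟩⟩ ⟨d, Finset.mem_filter.2 ⟨hd, h₄⟩⟩
    (Finset.disjoint_filter.2 fun _ _ h h' => h'.2 h.2)
    (Finset.disjoint_filter.2 fun _ _ h h' => h'.1 h.1)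
    (Finset.disjoint_filter.2 fun _ _ h h' => h'.1 h.1)
    (Finset.disjoint_filter.2 fun _ _ h h' => h'.1 h.1)
    (Finset.disjoint_filter.2 fun _ _ h h' => h'.1 h.1)
    (Finset.disjoint_filter.2 fun _ _ h h' => h'.2 h.2)
    (by ext x; simp only [Finset.mem_union, Finset.mem_filter]; tauto)
  exact ⟨x₁, x₂, x₃, x₄, (Finset.mem_filter.1 hx₁).2, (Finset.mem_filter.1 hx₂).2,
    (Finset.mem_filter.1 hx₃).2, (Finset.mem_filter.1 hx₄).2, hq⟩

open SimpleGraph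

namespace PhyloTree

variable {α : Type} {X : Finset α}

lemma isTree (T : PhyloTree X) : T.G.IsTree := ⟨T.connected, T.acyclic⟩

variable {T T' : PhyloTree X} {a b c d p q x y z : α} {u v w m : T.V}

lemma encard_neighborSet_eq_three (hv : ∀ x ∈ X, T.leaf x ≠ v) :
    (T.G.neighborSet v).encard = 3 :=
  Set.encard_eq_three.2 (Set.ncard_eq_three.1 (T.internal_degree v hv))

lemma leaf_eq_or_eq_of_mem_interval (hx : x ∈ X) (h : T.leaf x ∈ T.G.interval u v) :
    T.leaf x = u ∨ T.leaf x = v := by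
  refine T.isTree.eq_or_eq_of_mem_interval ?_ h
  obtain ⟨n, hn⟩ := Set.ncard_eq_one.1 (T.leaf_degree x hx)
  exact hn ▸ Set.subsingleton_singleton

lemma leaf_mem_interval_leaf_iff (hx : x ∈ X) (hp : p ∈ X) (hq : q ∈ X) :
    T.leaf x ∈ T.G.interval (T.leaf p) (T.leaf q) ↔ x = p ∨ x = q := by
  refine ⟨fun h => ?_, by rintro (rfl | rfl) <;> simp [left_mem_interval, right_mem_interval]⟩
  exact (leaf_eq_or_eq_of_mem_interval hx h).imp (T.leaf_inj x hx p hp) (T.leaf_inj x hx q hq)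

lemma leaf_ne_of_mem_interval (ha : a ∈ X) (hb : b ∈ X) (hc : c ∈ X) (hab : a ≠ b)
    (hac : a ≠ c) (hbc : b ≠ c) (h₁ : m ∈ T.G.interval (T.leaf a) (T.leaf b))
    (h₂ : m ∈ T.G.interval (T.leaf a) (T.leaf c)) (h₃ : m ∈ T.G.interval (T.leaf b) (T.leaf c)) :
    ∀ x ∈ X, T.leaf x ≠ m := by
  rintro x hx rfl
  rw [leaf_mem_interval_leaf_iff hx ha hb] at h₁
  rw [leaf_mem_interval_leaf_iff hx ha hc] at h₂
  rw [leaf_mem_interval_leaf_iff hx hb hc] at h₃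
  grind

lemma resolvesAs_iff_disjoint : T.ResolvesAs a b c d ↔
    Disjoint (T.G.interval (T.leaf a) (T.leaf b)) (T.G.interval (T.leaf c) (T.leaf d)) := by
  refine ⟨fun ⟨r, r', _, _, h⟩ => Set.disjoint_left.2 fun z h₁ h₂ => h z (h₁ r) (h₂ r'),
    fun h => ?_⟩
  obtain ⟨r, hr⟩ := (T.isTree.existsUnique_path (T.leaf a) (T.leaf b)).exists
  obtain ⟨r', hr'⟩ := (T.isTree.existsUnique_path (T.leaf c) (T.leaf d)).exists
  exact ⟨r, r', hr, hr', fun z h₁ h₂ => Set.disjoint_left.1 h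
    ((T.acyclic.mem_interval_iff hr).2 h₁) ((T.acyclic.mem_interval_iff hr').2 h₂)⟩

lemma resolvesAs_comm : T.ResolvesAs a b c d ↔ T.ResolvesAs c d a b := by
  rw [resolvesAs_iff_disjoint, resolvesAs_iff_disjoint, disjoint_comm]

lemma resolvesAs_swap_right : T.ResolvesAs a b c d ↔ T.ResolvesAs a b d c := by
  rw [resolvesAs_iff_disjoint, resolvesAs_iff_disjoint, interval_comm (T.leaf c)]

lemma ResolvesAs.ne (h : T.ResolvesAs a b c d) : a ≠ c ∧ a ≠ d ∧ b ≠ c ∧ b ≠ d := by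
  rw [resolvesAs_iff_disjoint, Set.disjoint_left] at h
  refine ⟨?_, ?_, ?_, ?_⟩ <;> rintro rfl
  · exact h left_mem_interval left_mem_interval
  · exact h left_mem_interval right_mem_interval
  · exact h right_mem_interval left_mem_interval
  · exact h right_mem_interval right_mem_interval

lemma resolvesAs_self_left (ha : a ∈ X) (hc : c ∈ X) (hd : d ∈ X) (hac : a ≠ c) (had : a ≠ d) :
    T.ResolvesAs a a c d := by
  rw [resolvesAs_iff_disjoint, interval_self, Set.disjoint_singleton_left,
    leaf_mem_interval_leaf_iff ha hc hd]
  exact fun h => h.elim hac had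

lemma resolvesAs_of_separates (ha : u ∈ T.G.interval (T.leaf a) w)
    (hb : u ∈ T.G.interval (T.leaf b) w) (hc : u ∉ T.G.interval (T.leaf c) w)
    (hd : u ∉ T.G.interval (T.leaf d) w) : T.ResolvesAs a b c d :=
  resolvesAs_iff_disjoint.2 (T.isTree.disjoint_interval_of_separates ha hb hc hd)

lemma exists_split_of_resolvesAs (h : T.ResolvesAs a b c d) :
    ∃ P : α → Prop, P a ∧ P b ∧ ¬ P c ∧ ¬ P d ∧
      ∀ p₁ p₂ p₃ p₄, P p₁ → P p₂ → ¬ P p₃ → ¬ P p₄ → T.ResolvesAs p₁ p₂ p₃ p₄ := by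
  rw [resolvesAs_iff_disjoint] at h
  obtain ⟨m, hab, hac, hbc⟩ := T.isTree.exists_median (T.leaf a) (T.leaf b) (T.leaf c)
  have hcd : m ∉ T.G.interval (T.leaf c) (T.leaf d) := Set.disjoint_left.1 h hab
  refine ⟨fun p => m ∈ T.G.interval (T.leaf p) (T.leaf c), hac, hbc, ?_, ?_,
    fun _ _ _ _ => resolvesAs_of_separates⟩
  · show m ∉ T.G.interval (T.leaf c) (T.leaf c)
    rw [interval_self]
    exact fun hm => hcd (hm ▸ left_mem_interval)
  · show m ∉ T.G.interval (T.leaf d) (T.leaf c)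
    rwa [interval_comm]

lemma not_resolvesAs_of_resolvesAs (h : T.ResolvesAs a b c d) : ¬ T.ResolvesAs a c b d := by
  intro h'
  rw [resolvesAs_iff_disjoint] at h h'
  obtain ⟨m, hab, hac, hbc⟩ := T.isTree.exists_median (T.leaf a) (T.leaf b) (T.leaf c)
  have hcd : m ∉ T.G.interval (T.leaf c) (T.leaf d) := Set.disjoint_left.1 h hab
  have hbd : m ∉ T.G.interval (T.leaf b) (T.leaf d) := Set.disjoint_left.1 h' hac
  rw [interval_comm] at hcd
  exact T.isTree.notMem_interval_trans hbd hcd hbc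

lemma resolvesAs_total (ha : a ∈ X) (hb : b ∈ X) (hc : c ∈ X) (hd : d ∈ X) (hab : a ≠ b)
    (hac : a ≠ c) (hbc : b ≠ c) :
    T.ResolvesAs a b c d ∨ T.ResolvesAs a c b d ∨ T.ResolvesAs a d b c := by
  obtain ⟨m, h₁, h₂, h₃⟩ := T.isTree.exists_median (T.leaf a) (T.leaf b) (T.leaf c)
  have hm := leaf_ne_of_mem_interval ha hb hc hab hac hbc h₁ h₂ h₃
  simp only [resolvesAs_iff_disjoint]
  rcases T.isTree.notMem_interval_of_encard_le_three (encard_neighborSet_eq_three hm).le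
    (hm a ha) (hm b hb) (hm c hc) h₁ h₂ h₃ (hm d hd) with h | h | h
  · rw [← T.isTree.disjoint_interval_iff_notMem h₁ h₂ h₃, interval_comm] at h
    exact .inr (.inr h)
  · rw [interval_comm] at h₁
    rw [← T.isTree.disjoint_interval_iff_notMem h₁ h₃ h₂, interval_comm] at h
    exact .inr (.inl h.symm)
  · rw [interval_comm] at h₂ h₃
    rw [← T.isTree.disjoint_interval_iff_notMem h₂ h₃ h₁, interval_comm] at h
    exact .inl h.symm

section Splits

variable [DecidableEq α] {S : Set (Finset α)}

lemma not_resolvesAs_of_fourWayPartitionProperty (hfour : FourWayPartitionProperty X S)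
    (hQ : ∀ q ∈ QSet S, ResolveIdentically T T' q) (ha : a ∈ X) (hb : b ∈ X) (hc : c ∈ X)
    (hd : d ∈ X) (h : T.ResolvesAs a b c d) : ¬ T'.ResolvesAs a c b d := by
  intro h'
  obtain ⟨P, hPa, hPb, hPc, hPd, hP⟩ := exists_split_of_resolvesAs h
  obtain ⟨R, hRa, hRc, hRb, hRd, hR⟩ := exists_split_of_resolvesAs h'
  obtain ⟨x₁, x₂, x₃, x₄, h₁, h₂, h₃, h₄, hq⟩ :=
    hfour.exists_quartet_of_predicates P R ha hb hc hd ⟨hPa, hRa⟩ ⟨hPb, hRb⟩ ⟨hPc, hRc⟩ ⟨hPd, hRd⟩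
  have hT' := (hQ _ hq x₁ x₂ x₃ x₄ rfl).1 (hP x₁ x₂ x₃ x₄ h₁.1 h₂.1 h₃.1 h₄.1)
  exact not_resolvesAs_of_resolvesAs hT' (hR x₁ x₃ x₂ x₄ h₁.2 h₃.2 h₂.2 h₄.2)

lemma resolvesAs_of_fourWayPartitionProperty (hfour : FourWayPartitionProperty X S)
    (hQ : ∀ q ∈ QSet S, ResolveIdentically T T' q) (ha : a ∈ X) (hb : b ∈ X) (hc : c ∈ X)
    (hd : d ∈ X) (h : T.ResolvesAs a b c d) : T'.ResolvesAs a b c d := by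
  obtain ⟨hac, had, hbc, hbd⟩ := h.ne
  by_cases hab : a = b
  · subst hab
    exact resolvesAs_self_left ha hc hd hac had
  by_cases hcd : c = d
  · subst hcd
    exact resolvesAs_comm.1 (resolvesAs_self_left hc ha hb (Ne.symm hac) (Ne.symm hbc))
  rcases resolvesAs_total (T := T') ha hb hc hd hab hac hbc with h' | h' | h'
  · exact h'
  · exact absurd h' (not_resolvesAs_of_fourWayPartitionProperty hfour hQ ha hb hc hd h)
  · exact absurd h' (not_resolvesAs_of_fourWayPartitionProperty hfour hQ ha hb hd hc
      (resolvesAs_swap_right.1 h))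

end Splits

def pairsThrough (T : PhyloTree X) (v : T.V) : Set (α × α) :=
  {pq | pq.1 ∈ X ∧ pq.2 ∈ X ∧ v ∈ T.G.interval (T.leaf pq.1) (T.leaf pq.2)}

lemma exists_leaf_beyond {u v : T.V} (h : u ≠ v) : ∃ x ∈ X, u ∈ T.G.interval (T.leaf x) v := by
  by_cases hu : ∃ x ∈ X, T.leaf x = u
  · obtain ⟨x, hx, rfl⟩ := hu
    exact ⟨x, hx, left_mem_interval⟩
  push Not at hu
  obtain ⟨n, hn, hnv, -⟩ := T.isTree.exists_adj_notMem_interval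
    (by rw [encard_neighborSet_eq_three hu]; norm_num) v v
  have hun : u ∈ T.G.interval n v := (T.isTree.mem_or_mem_of_adj hn v).resolve_right hnv
  have : {z | n ∈ T.G.interval z v}.ncard < {z | u ∈ T.G.interval z v}.ncard :=
    haveI := T.fintypeV
    Set.ncard_lt_ncard ⟨fun z hz => interval_subset_interval_right hz hun,
      fun hsub => hnv (hsub left_mem_interval)⟩
  obtain ⟨x, hx, hnx⟩ := exists_leaf_beyond (u := n) (v := v) fun h => hnv (h ▸ right_mem_interval)
  exact ⟨x, hx, interval_subset_interval_right hnx hun⟩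
termination_by {z | u ∈ T.G.interval z v}.ncard

lemma exists_leaf_mem_interval (u a b : T.V) :
    ∃ x ∈ X, u ∈ T.G.interval (T.leaf x) a ∧ u ∈ T.G.interval (T.leaf x) b := by
  by_cases hu : ∃ x ∈ X, T.leaf x = u
  · obtain ⟨x, hx, rfl⟩ := hu
    exact ⟨x, hx, left_mem_interval, left_mem_interval⟩
  push Not at hu
  obtain ⟨n, hn, hna, hnb⟩ := T.isTree.exists_adj_notMem_interval
    (by rw [encard_neighborSet_eq_three hu]; norm_num) a b
  obtain ⟨x, hx, hnx⟩ := exists_leaf_beyond hn.ne'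
  rw [interval_comm] at hnx
  have beyond : ∀ {c}, n ∉ T.G.interval u c → u ∈ T.G.interval (T.leaf x) c :=
    fun hnc => by_contra fun h => hnc ((T.isTree.adj_mem_interval_iff hn hnx).2 h)
  exact ⟨x, hx, beyond hna, beyond hnb⟩

lemma exists_leaves_separating (hw : w ∉ T.G.interval u v) :
    ∃ p ∈ X, ∃ q ∈ X, u ∈ T.G.interval (T.leaf p) (T.leaf q) ∧
      v ∈ T.G.interval (T.leaf p) (T.leaf q) ∧ w ∉ T.G.interval (T.leaf p) (T.leaf q) := by
  obtain ⟨p, hp, hpv, hpw⟩ := exists_leaf_mem_interval u v w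
  obtain ⟨q, hq, hqp, hqw⟩ := exists_leaf_mem_interval v (T.leaf p) w
  rw [interval_comm] at hqp
  refine ⟨p, hp, q, hq, interval_subset_interval_left hqp hpv, hqp, fun h => ?_⟩
  rcases T.isTree.interval_subset_union v h with h | h
  · rcases T.isTree.interval_subset_union u h with h | h
    · rw [interval_comm] at h hpw
      exact hw (T.isTree.eq_of_mem_interval h hpw ▸ left_mem_interval)
    · exact hw h
  · rw [interval_comm] at hqw
    exact hw (T.isTree.eq_of_mem_interval h hqw ▸ right_mem_interval)

lemma mem_interval_iff_pairsThrough :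
    w ∈ T.G.interval u v ↔ T.pairsThrough u ∩ T.pairsThrough v ⊆ T.pairsThrough w := by
  refine ⟨fun hw _ ⟨⟨hp, hq, hu⟩, ⟨_, _, hv⟩⟩ =>
    ⟨hp, hq, T.isTree.interval_subset_interval hu hv hw⟩, fun h => by_contra fun hw => ?_⟩
  obtain ⟨p, hp, q, hq, hu, hv, hw⟩ := exists_leaves_separating hw
  exact hw (@h (p, q) ⟨⟨hp, hq, hu⟩, ⟨hp, hq, hv⟩⟩).2.2

lemma pairsThrough_injective : Function.Injective T.pairsThrough := fun u w h => by
  have : w ∈ T.G.interval u u := mem_interval_iff_pairsThrough.2 (by rw [Set.inter_self, h])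
  rw [interval_self] at this
  exact this.symm

lemma pairsThrough_leaf (hx : x ∈ X) :
    T.pairsThrough (T.leaf x) = {pq | pq.1 ∈ X ∧ pq.2 ∈ X ∧ (x = pq.1 ∨ x = pq.2)} := by
  ext ⟨p, q⟩
  exact and_congr_right fun hp => and_congr_right fun hq => leaf_mem_interval_leaf_iff hx hp hq

lemma exists_leaves_median (hv : ∀ x ∈ X, T.leaf x ≠ v) :
    ∃ x ∈ X, ∃ y ∈ X, ∃ z ∈ X, x ≠ y ∧ x ≠ z ∧ y ≠ z ∧ v ∈ T.G.interval (T.leaf x) (T.leaf y) ∧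
      v ∈ T.G.interval (T.leaf x) (T.leaf z) ∧ v ∈ T.G.interval (T.leaf y) (T.leaf z) := by
  obtain ⟨x, hx, -⟩ := exists_leaf_mem_interval v v v
  obtain ⟨y, hy, hyx, -⟩ := exists_leaf_mem_interval v (T.leaf x) (T.leaf x)
  obtain ⟨z, hz, hzx, hzy⟩ := exists_leaf_mem_interval v (T.leaf x) (T.leaf y)
  have hne : ∀ {a b}, a ∈ X → v ∈ T.G.interval (T.leaf a) (T.leaf b) → b ≠ a := by
    intro a b ha h hba
    rw [hba, interval_self] at h
    exact hv a ha h.symm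
  exact ⟨x, hx, y, hy, z, hz, hne hy hyx, hne hz hzx, hne hz hzy,
    by rwa [interval_comm], by rwa [interval_comm], by rwa [interval_comm]⟩

lemma pairsThrough_of_median (hx : x ∈ X) (hy : y ∈ X) (hz : z ∈ X) (hxy : x ≠ y)
    (hxz : x ≠ z) (hyz : y ≠ z) (h₁ : m ∈ T.G.interval (T.leaf x) (T.leaf y))
    (h₂ : m ∈ T.G.interval (T.leaf x) (T.leaf z)) (h₃ : m ∈ T.G.interval (T.leaf y) (T.leaf z)) :
    T.pairsThrough m = {pq | pq.1 ∈ X ∧ pq.2 ∈ X ∧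
      ¬ ((T.ResolvesAs pq.1 x y z ∧ T.ResolvesAs pq.2 x y z) ∨
        (T.ResolvesAs pq.1 y x z ∧ T.ResolvesAs pq.2 y x z) ∨
        (T.ResolvesAs pq.1 z x y ∧ T.ResolvesAs pq.2 z x y))} := by
  have hm := leaf_ne_of_mem_interval hx hy hz hxy hxz hyz h₁ h₂ h₃
  have h₁' : m ∈ T.G.interval (T.leaf y) (T.leaf x) := by rwa [interval_comm]
  have h₂' : m ∈ T.G.interval (T.leaf z) (T.leaf x) := by rwa [interval_comm]
  have h₃' : m ∈ T.G.interval (T.leaf z) (T.leaf y) := by rwa [interval_comm]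
  have side_x : ∀ t, T.ResolvesAs t x y z ↔ m ∉ T.G.interval (T.leaf t) (T.leaf x) := fun t => by
    rw [resolvesAs_iff_disjoint, T.isTree.disjoint_interval_iff_notMem h₁ h₂ h₃]
  have side_y : ∀ t, T.ResolvesAs t y x z ↔ m ∉ T.G.interval (T.leaf t) (T.leaf y) := fun t => by
    rw [resolvesAs_iff_disjoint, T.isTree.disjoint_interval_iff_notMem h₁' h₃ h₂]
  have side_z : ∀ t, T.ResolvesAs t z x y ↔ m ∉ T.G.interval (T.leaf t) (T.leaf z) := fun t => by
    rw [resolvesAs_iff_disjoint, T.isTree.disjoint_interval_iff_notMem h₂' h₃' h₁]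
  ext ⟨p, q⟩
  refine and_congr_right fun hp => and_congr_right fun _ => ?_
  simp only [side_x, side_y, side_z]
  rw [← T.isTree.notMem_interval_iff_of_encard_le_three (encard_neighborSet_eq_three hm).le
    (hm x hx) (hm y hy) (hm z hz) h₁ h₂ h₃ (hm p hp), not_not]

lemma exists_pairsThrough_eq
    (h : ∀ a ∈ X, ∀ b ∈ X, ∀ c ∈ X, ∀ d ∈ X, T.ResolvesAs a b c d ↔ T'.ResolvesAs a b c d)
    (v : T.V) : ∃ v' : T'.V, T'.pairsThrough v' = T.pairsThrough v := by
  by_cases hv : ∃ x ∈ X, T.leaf x = v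
  · obtain ⟨x, hx, rfl⟩ := hv
    exact ⟨T'.leaf x, by rw [pairsThrough_leaf hx, pairsThrough_leaf hx]⟩
  push Not at hv
  obtain ⟨x, hx, y, hy, z, hz, hxy, hxz, hyz, h₁, h₂, h₃⟩ := exists_leaves_median hv
  obtain ⟨m, h₁', h₂', h₃'⟩ := T'.isTree.exists_median (T'.leaf x) (T'.leaf y) (T'.leaf z)
  refine ⟨m, ?_⟩
  rw [pairsThrough_of_median hx hy hz hxy hxz hyz h₁ h₂ h₃,
    pairsThrough_of_median hx hy hz hxy hxz hyz h₁' h₂' h₃']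
  ext ⟨p, q⟩
  refine and_congr_right fun hp => and_congr_right fun hq => ?_
  rw [h p hp x hx y hy z hz, h q hq x hx y hy z hz, h p hp y hy x hx z hz, h q hq y hy x hx z hz,
    h p hp z hz x hx y hy, h q hq z hz x hx y hy]

theorem labelIso_of_resolvesAs_iff
    (h : ∀ a ∈ X, ∀ b ∈ X, ∀ c ∈ X, ∀ d ∈ X, T.ResolvesAs a b c d ↔ T'.ResolvesAs a b c d) :
    LabelIso T T' := by
  choose φ hφ using exists_pairsThrough_eq h
  choose ψ hψ using
    exists_pairsThrough_eq fun a ha b hb c hc d hd => (h a ha b hb c hc d hd).symm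
  have hinj : φ.Injective := fun u v huv => pairsThrough_injective (by rw [← hφ, ← hφ, huv])
  have hsurj : φ.Surjective := fun v' => ⟨ψ v', pairsThrough_injective (by rw [hφ, hψ])⟩
  have himage : ∀ u v, T'.G.interval (φ u) (φ v) = φ '' T.G.interval u v := by
    intro u v
    ext w'
    obtain ⟨w, rfl⟩ := hsurj w'
    rw [hinj.mem_set_image, mem_interval_iff_pairsThrough, mem_interval_iff_pairsThrough,
      hφ, hφ, hφ]
  refine ⟨⟨Equiv.ofBijective φ ⟨hinj, hsurj⟩, fun {u v} => ?_⟩, fun x hx => ?_⟩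
  · show T'.G.Adj (φ u) (φ v) ↔ T.G.Adj u v
    rw [T.isTree.adj_iff, T'.isTree.adj_iff, himage, ← Set.image_pair,
      Set.image_subset_image_iff hinj, hinj.ne_iff]
  · exact pairsThrough_injective (show T'.pairsThrough (φ (T.leaf x)) = _ by
      rw [hφ, pairsThrough_leaf hx, pairsThrough_leaf hx])

end PhyloTree

theorem decisive_of_fourWayPartitionProperty_general {α : Type} [DecidableEq α]
    (X : Finset α) (S : Set (Finset α)) (hfour : FourWayPartitionProperty X S) :
    PhyloDecisive X S := fun _ _ hQ =>
  PhyloTree.labelIso_of_resolvesAs_iff fun _ ha _ hb _ hc _ hd =>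
    ⟨PhyloTree.resolvesAs_of_fourWayPartitionProperty hfour hQ ha hb hc hd,
      PhyloTree.resolvesAs_of_fourWayPartitionProperty hfour
        (fun q hq a b c d he => (hQ q hq a b c d he).symm) ha hb hc hd⟩

/-- if `S` satisfies the four-way partition property for `X` then `S`
is phylogenetically decisive for `X`. -/
theorem decisive_of_fourWayPartitionProperty {α : Type} [DecidableEq α]
    (X : Finset α) (hX : 4 ≤ X.card)
    (S : Set (Finset α)) (hS : ∀ Y ∈ S, Y ⊆ X)
    (hfour : FourWayPartitionProperty X S) :
    PhyloDecisive X S :=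
  decisive_of_fourWayPartitionProperty_general X S hfour
end

section
/- Let T be a binary phylogenetic X-tree with |X| ≥ 4 and let a, b ∈ X be distinct. If the leaves labeled a and b do not form a cherry of T, then there exists a pair of nonempty sets C, D that partition X − {a,b} such that for every c ∈ C and every d ∈ D, T does not resolve the quartet {a,b,c,d} as ab|cd. -/
/-!
Let `w` be the neighbour of the leaf `b`. Every path from `a` to `b` passes through `w`, so we
may take for `C` the labels whose leaf is reachable from `a` avoiding `w`, and for `D` the
others: a path from a leaf in `C` to a leaf in `D` must then meet `w`. As `a, b` is not a cherry,
`w` and the neighbour `u` of `a` are distinct vertices of degree 3. A leaf beyond a neighbour of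
`w` that points neither to `a` nor to `b` lies in `D`, and a leaf beyond a neighbour of `u` that
points neither to `a` nor to `w` lies in `C`.
-/

namespace SimpleGraph

variable {V : Type*} {G : SimpleGraph V} {u v w x : V}

def ReachableAvoiding (G : SimpleGraph V) (w u v : V) : Prop :=
  ∃ p : G.Walk u v, w ∉ p.support

namespace ReachableAvoiding

theorem refl (h : u ≠ w) : G.ReachableAvoiding w u u :=
  ⟨.nil, by simpa using h.symm⟩

theorem symm (h : G.ReachableAvoiding w u v) : G.ReachableAvoiding w v u :=
  let ⟨p, hp⟩ := h
  ⟨p.reverse, by simpa using hp⟩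

theorem trans (h₁ : G.ReachableAvoiding w u v) (h₂ : G.ReachableAvoiding w v x) :
    G.ReachableAvoiding w u x :=
  let ⟨p, hp⟩ := h₁
  let ⟨q, hq⟩ := h₂
  ⟨p.append q, by simp [Walk.mem_support_append_iff, hp, hq]⟩

theorem of_adj (h : G.Adj u v) (hu : u ≠ w) (hv : v ≠ w) : G.ReachableAvoiding w u v :=
  ⟨h.toWalk, by simp [hu.symm, hv.symm]⟩

theorem of_mem_support {p : G.Walk u v} (hp : w ∉ p.support) (hx : x ∈ p.support) :
    G.ReachableAvoiding w u x := by
  classical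
  exact ⟨p.takeUntil x hx, fun h => hp (p.support_takeUntil_subset_support hx h)⟩

end ReachableAvoiding

theorem neighborSet_eq_singleton_of_adj (h : (G.neighborSet u).ncard = 1) (huv : G.Adj u v) :
    G.neighborSet u = {v} := by
  obtain ⟨y, hy⟩ := Set.ncard_eq_one.mp h
  rwa [show v = y by simpa [hy] using (show v ∈ G.neighborSet u from huv)]

theorem not_reachableAvoiding_of_neighborSet_eq_singleton (h : G.neighborSet v = {w})
    (huv : u ≠ v) : ¬ G.ReachableAvoiding w u v := by
  rintro ⟨p, hp⟩
  have hnil : ¬ p.Nil := Walk.not_nil_of_ne huv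
  have hadj : p.penultimate ∈ G.neighborSet v := (p.adj_penultimate hnil).symm
  rw [h, Set.mem_singleton_iff] at hadj
  exact hp (hadj ▸ p.getVert_mem_support _)

theorem Walk.mem_of_forall_adj_mem {s : Set V} (hs : ∀ x ∈ s, ∀ y, G.Adj x y → y ∈ s)
    (p : G.Walk u v) (hu : u ∈ s) : v ∈ s := by
  induction p with
  | nil => exact hu
  | cons h _ ih => exact ih (hs _ hu _ h)

theorem Connected.eq_or_eq_of_neighborSet_eq_singleton (hG : G.Connected)
    (hu : G.neighborSet u = {v}) (hv : G.neighborSet v = {u}) (x : V) : x = u ∨ x = v := by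
  refine ((hG u x).some).mem_of_forall_adj_mem (s := {u, v}) ?_ (by simp)
  rintro y (rfl | rfl) z hz
  · exact Or.inr (by simpa [hu] using (show z ∈ G.neighborSet y from hz))
  · exact Or.inl (by simpa [hv] using (show z ∈ G.neighborSet y from hz))

theorem IsAcyclic.eq_of_adj_of_reachableAvoiding (hG : G.IsAcyclic) (h₁ : G.Adj w u)
    (h₂ : G.Adj w v) (h : G.ReachableAvoiding w u v) : u = v := by
  obtain ⟨p, hp⟩ := h
  by_contra huv
  -- `w v` is a bridge, but `w u` followed by `p` reaches `v` without crossing it.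
  have hbridge := isAcyclic_iff_forall_adj_isBridge.mp hG h₂
  have hmem := isBridge_iff_forall_walk_mem_edges.mp hbridge (.cons h₁ p)
  rw [Walk.edges_cons, List.mem_cons] at hmem
  rcases hmem with heq | hedge
  · exact huv (Sym2.congr_right.mp heq).symm
  · exact hp (p.fst_mem_support_of_mem_edges hedge)

theorem IsAcyclic.exists_adj_ne_not_reachableAvoiding (hG : G.IsAcyclic)
    (h3 : (G.neighborSet w).ncard = 3) (v x : V) :
    ∃ m, G.Adj w m ∧ m ≠ v ∧ ¬ G.ReachableAvoiding w x m := by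
  by_contra! h
  have key : ∀ m m', G.Adj w m → G.Adj w m' → m ≠ v → m' ≠ v → m = m' :=
    fun m m' hm hm' hmv hm'v =>
      hG.eq_of_adj_of_reachableAvoiding hm hm' ((h m hm hmv).symm.trans (h m' hm' hm'v))
  obtain ⟨m₁, m₂, m₃, h₁₂, h₁₃, h₂₃, hN⟩ := Set.ncard_eq_three.mp h3
  have hadj : G.Adj w m₁ ∧ G.Adj w m₂ ∧ G.Adj w m₃ := by
    simp only [← mem_neighborSet, hN]; simp
  obtain ⟨a₁, a₂, a₃⟩ := hadj
  by_cases hv₁ : m₁ = v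
  · exact h₂₃ (key _ _ a₂ a₃ (fun h => h₁₂ (hv₁.trans h.symm))
      (fun h => h₁₃ (hv₁.trans h.symm)))
  by_cases hv₂ : m₂ = v
  · exact h₁₃ (key _ _ a₁ a₃ hv₁ (fun h => h₂₃ (hv₂.trans h.symm)))
  · exact h₁₂ (key _ _ a₁ a₂ hv₁ hv₂)

theorem Walk.IsPath.exists_isPath_append_forall_adj_mem [Fintype V] {u v : V} {p : G.Walk u v}
    (hp : p.IsPath) : ∃ (z : V) (q : G.Walk v z), (p.append q).IsPath ∧
      ∀ y, G.Adj z y → y ∈ (p.append q).support := by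
  by_cases h : ∀ y, G.Adj v y → y ∈ p.support
  · exact ⟨v, .nil, by simpa using hp, by simpa using h⟩
  push Not at h
  obtain ⟨y, hy, hyp⟩ := h
  obtain ⟨z, q, hq, hz⟩ := (hp.concat hyp hy).exists_isPath_append_forall_adj_mem
  rw [Walk.concat_append] at hq hz
  exact ⟨z, .cons hy q, hq, hz⟩
termination_by Fintype.card V - p.length
decreasing_by
  have := (hp.concat hyp hy).length_lt
  simp only [Walk.length_concat] at this ⊢
  omega

theorem IsAcyclic.exists_ncard_neighborSet_eq_one_reachableAvoiding [Fintype V] (hG : G.IsAcyclic)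
    (h : G.Adj w u) : ∃ z, (G.neighborSet z).ncard = 1 ∧ G.ReachableAvoiding w u z := by
  obtain ⟨z, q, hq, hz⟩ := (Walk.IsPath.of_adj h).exists_isPath_append_forall_adj_mem
  rw [Walk.cons_nil_append] at hq hz
  refine ⟨z, Set.ncard_eq_one.mpr ⟨(Walk.cons h q).penultimate, ?_⟩, q,
    ((Walk.cons_isPath_iff _ _).mp hq).2⟩
  refine Set.eq_singleton_iff_unique_mem.mpr ⟨(Walk.adj_penultimate Walk.not_nil_cons).symm, ?_⟩
  exact fun y hy => hG.eq_penultimate_of_adj_end hq hy (hz y hy)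

end SimpleGraph

namespace PhyloTree

open SimpleGraph

variable {α : Type} {X : Finset α} (T : PhyloTree X) {a b : α} {s u v w : T.V}

theorem leaf_ne_leaf (ha : a ∈ X) (hb : b ∈ X) (hab : a ≠ b) : T.leaf a ≠ T.leaf b :=
  fun h => hab (T.leaf_inj a ha b hb h)

theorem mem_sdiff_of_leaf_ne [DecidableEq α] {x : α} (hx : x ∈ X) (hxa : T.leaf x ≠ T.leaf a)
    (hxb : T.leaf x ≠ T.leaf b) : x ∈ X \ {a, b} := by
  simp only [Finset.mem_sdiff, Finset.mem_insert, Finset.mem_singleton, not_or]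
  exact ⟨hx, fun h => hxa (h ▸ rfl), fun h => hxb (h ▸ rfl)⟩

theorem ncard_neighborSet_eq_three_of_adj (hu : (T.G.neighborSet u).ncard = 1)
    (huw : T.G.Adj u w) (hvu : v ≠ u) (hvw : v ≠ w) : (T.G.neighborSet w).ncard = 3 := by
  refine T.internal_degree w fun y hy hyw => ?_
  have hw : T.G.neighborSet w = {u} :=
    neighborSet_eq_singleton_of_adj (hyw ▸ T.leaf_degree y hy) huw.symm
  rcases T.connected.eq_or_eq_of_neighborSet_eq_singleton
    (neighborSet_eq_singleton_of_adj hu huw) hw v with h | h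
  exacts [hvu h, hvw h]

theorem exists_mem_reachableAvoiding (h : T.G.Adj w u) :
    ∃ x ∈ X, T.G.ReachableAvoiding w u (T.leaf x) := by
  let := T.fintypeV
  obtain ⟨z, hz, hwz⟩ := T.acyclic.exists_ncard_neighborSet_eq_one_reachableAvoiding h
  obtain ⟨x, hx, rfl⟩ := T.degree_one_is_leaf z hz
  exact ⟨x, hx, hwz⟩

theorem exists_mem_not_reachableAvoiding (hw : (T.G.neighborSet w).ncard = 3)
    (hwv : T.G.Adj w v) (hu : u ≠ w) :
    ∃ x ∈ X, T.leaf x ≠ u ∧ T.leaf x ≠ v ∧ ¬ T.G.ReachableAvoiding w u (T.leaf x) := by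
  obtain ⟨n, hwn, hnv, hun⟩ := T.acyclic.exists_adj_ne_not_reachableAvoiding hw v u
  obtain ⟨x, hx, hnx⟩ := T.exists_mem_reachableAvoiding hwn
  have hux : ¬ T.G.ReachableAvoiding w u (T.leaf x) := fun h => hun (h.trans hnx.symm)
  refine ⟨x, hx, ?_, ?_, hux⟩
  · rintro hxu
    rw [hxu] at hux
    exact hux (.refl hu)
  · rintro hxv
    exact hnv (T.acyclic.eq_of_adj_of_reachableAvoiding hwn hwv (hxv ▸ hnx))

theorem exists_mem_reachableAvoiding_of_adj (hu : (T.G.neighborSet u).ncard = 3)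
    (hsu : T.G.Adj s u) (hsw : s ≠ w) (huw : u ≠ w) :
    ∃ x ∈ X, T.leaf x ≠ s ∧ T.G.ReachableAvoiding w s (T.leaf x) := by
  obtain ⟨m, hum, hms, hwm⟩ := T.acyclic.exists_adj_ne_not_reachableAvoiding hu s w
  obtain ⟨x, hx, r, hr⟩ := T.exists_mem_reachableAvoiding hum
  have hwr : w ∉ r.support := fun h => hwm (ReachableAvoiding.of_mem_support hr h).symm
  refine ⟨x, hx, ?_, ?_⟩
  · rintro hxs
    exact hms (T.acyclic.eq_of_adj_of_reachableAvoiding hum hsu.symm (hxs ▸ ⟨r, hr⟩))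
  · have hmw : m ≠ w := fun h => hwr (h ▸ r.start_mem_support)
    exact ((ReachableAvoiding.of_adj hsu hsw huw).trans (.of_adj hum huw hmw)).trans ⟨r, hwr⟩

theorem not_adj_leaf_leaf (hX : 3 ≤ X.card) (ha : a ∈ X) (hb : b ∈ X) :
    ¬ T.G.Adj (T.leaf a) (T.leaf b) := by
  classical
  intro h
  obtain ⟨c, hc⟩ : (X \ {a, b}).Nonempty := by
    rw [← Finset.card_pos]
    have := Finset.le_card_sdiff {a, b} X
    have := Finset.card_le_two (a := a) (b := b)
    omega
  simp only [Finset.mem_sdiff, Finset.mem_insert, Finset.mem_singleton, not_or] at hc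
  obtain ⟨hc, hca, hcb⟩ := hc
  have := T.ncard_neighborSet_eq_three_of_adj (T.leaf_degree a ha) h
    (T.leaf_ne_leaf hc ha hca) (T.leaf_ne_leaf hc hb hcb)
  have := T.leaf_degree b hb
  omega

end PhyloTree

open SimpleGraph in
/-- Lemma 1(ii): if the leaves labeled `a, b` do not form a cherry of
`T`, there are nonempty sets `C, D` partitioning `X − {a,b}` such that for all
`c ∈ C`, `d ∈ D`, the tree `T` does not resolve `{a,b,c,d}` as `ab|cd`. -/
theorem not_cherry_exists_partition {α : Type} [DecidableEq α]
    {X : Finset α} (hX : 4 ≤ X.card) (T : PhyloTree X)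
    (a b : α) (ha : a ∈ X) (hb : b ∈ X) (hab : a ≠ b)
    (hnotcherry : ¬ T.IsCherry a b) :
    ∃ C D : Finset α, C.Nonempty ∧ D.Nonempty ∧ Disjoint C D ∧
      C ∪ D = X \ {a, b} ∧
      ∀ c ∈ C, ∀ d ∈ D, ¬ T.ResolvesAs a b c d := by
  classical
  set A := T.leaf a
  set B := T.leaf b
  have hAB : A ≠ B := T.leaf_ne_leaf ha hb hab
  have hnadj : ¬ T.G.Adj A B := T.not_adj_leaf_leaf (by omega) ha hb
  obtain ⟨U, hU⟩ := Set.ncard_eq_one.mp (T.leaf_degree a ha)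
  obtain ⟨W, hW⟩ := Set.ncard_eq_one.mp (T.leaf_degree b hb)
  have hAU : T.G.Adj A U := by rw [← mem_neighborSet, hU]; rfl
  have hBW : T.G.Adj B W := by rw [← mem_neighborSet, hW]; rfl
  have hU3 := T.ncard_neighborSet_eq_three_of_adj (T.leaf_degree a ha) hAU hAB.symm
    fun h => hnadj (h ▸ hAU)
  have hW3 := T.ncard_neighborSet_eq_three_of_adj (T.leaf_degree b hb) hBW hAB
    fun h => hnadj (h ▸ hBW).symm
  have hUW : U ≠ W := fun h => hnotcherry ⟨U, hAU, h ▸ hBW⟩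
  have hAW : A ≠ W := fun h => hnadj (h ▸ hBW.symm)
  have hBsep : ¬ T.G.ReachableAvoiding W A B :=
    not_reachableAvoiding_of_neighborSet_eq_singleton hW hAB
  obtain ⟨c, hc, hcA, hAc⟩ := T.exists_mem_reachableAvoiding_of_adj hU3 hAU hAW hUW
  obtain ⟨d, hd, hdA, hdB, hAd⟩ := T.exists_mem_not_reachableAvoiding hW3 hBW.symm hAW
  refine ⟨(X \ {a, b}).filter (fun x => T.G.ReachableAvoiding W A (T.leaf x)),
    (X \ {a, b}).filter (fun x => ¬ T.G.ReachableAvoiding W A (T.leaf x)),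
    ⟨c, Finset.mem_filter.2
      ⟨T.mem_sdiff_of_leaf_ne hc hcA fun h => hBsep (by rwa [h] at hAc), hAc⟩⟩,
    ⟨d, Finset.mem_filter.2 ⟨T.mem_sdiff_of_leaf_ne hd hdA hdB, hAd⟩⟩,
    Finset.disjoint_filter_filter_not _ _ _, Finset.filter_union_filter_not_eq _ _, ?_⟩
  rintro c hc d hd ⟨p, q, -, -, hpq⟩
  have hWp : W ∈ p.support := by_contra fun h => hBsep ⟨p, h⟩
  exact (Finset.mem_filter.1 hd).2 ((Finset.mem_filter.1 hc).2.trans ⟨q, hpq W hWp⟩)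
end

section
/- Let X be a finite set, let a, b ∈ X be distinct, and set X' = X − {b}. Let S be a collection of subsets of X, and let S' be the collection of subsets of X' obtained from S by replacing, in each Y ∈ S, every occurrence of b by a (that is, Y is replaced by (Y − {b}) ∪ {a} if b ∈ Y, and by Y otherwise). If |X'| ≥ 4 and S satisfies the four-way partition property for X, then S' satisfies the four-way partition property for X'. -/
/-!
Replacing `b` by `a` in every member of `S` is taking images under the surjection
`Function.update id b a : X → X - {b}`, and the four-way partition property passes to images
along surjections: a partition of the target pulls back to a partition of `X`, and the map sends
a quartet picked across the pulled-back blocks, lying in some `Y ∈ S`, to a quartet picked across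
the original blocks, lying in the image of `Y`.
-/

open Finset

theorem FourWayPartitionProperty.image {α β : Type} [DecidableEq α] [DecidableEq β]
    {X : Finset α} {X' : Finset β} {S : Set (Finset α)} {g : α → β}
    (hmaps : Set.MapsTo g X X') (hsurj : Set.SurjOn g X X')
    (h : FourWayPartitionProperty X S) :
    FourWayPartitionProperty X' (Finset.image g '' S) := by
  intro A1 A2 A3 A4 h1 h2 h3 h4 d12 d13 d14 d23 d24 d34 hunion
  let pullback (A : Finset β) : Finset α := X.filter (g · ∈ A)
  have mem_of_mem_pullback {A : Finset β} {x : α} (hx : x ∈ pullback A) : g x ∈ A :=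
    (mem_filter.1 hx).2
  have pullback_nonempty {A : Finset β} (hA : A ⊆ X') (hne : A.Nonempty) :
      (pullback A).Nonempty := by
    obtain ⟨y, hy⟩ := hne
    obtain ⟨x, hx, rfl⟩ := hsurj (hA hy)
    exact ⟨x, mem_filter.2 ⟨hx, hy⟩⟩
  have pullback_disjoint {A A' : Finset β} (hd : Disjoint A A') :
      Disjoint (pullback A) (pullback A') :=
    disjoint_filter.2 fun _ _ hx hx' => disjoint_left.1 hd hx hx'
  have pullback_cover : pullback A1 ∪ pullback A2 ∪ pullback A3 ∪ pullback A4 = X := by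
    ext x
    simp only [pullback, mem_union, mem_filter, ← and_or_left, and_iff_left_iff_imp]
    intro hx
    simpa only [← hunion, mem_coe, mem_union] using hmaps hx
  obtain ⟨⟨⟨s1, s2⟩, s3⟩, s4⟩ : ((A1 ⊆ X' ∧ A2 ⊆ X') ∧ A3 ⊆ X') ∧ A4 ⊆ X' := by
    simpa only [union_subset_iff] using hunion.le
  obtain ⟨x1, hx1, x2, hx2, x3, hx3, x4, hx4, -, Y, hY, hxY⟩ :=
    h (pullback A1) (pullback A2) (pullback A3) (pullback A4)
      (pullback_nonempty s1 h1)
      (pullback_nonempty s2 h2)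
      (pullback_nonempty s3 h3)
      (pullback_nonempty s4 h4)
      (pullback_disjoint d12) (pullback_disjoint d13) (pullback_disjoint d14)
      (pullback_disjoint d23) (pullback_disjoint d24) (pullback_disjoint d34) pullback_cover
  have y1 := mem_of_mem_pullback hx1
  have y2 := mem_of_mem_pullback hx2
  have y3 := mem_of_mem_pullback hx3
  have y4 := mem_of_mem_pullback hx4
  refine ⟨g x1, y1, g x2, y2, g x3, y3, g x4, y4, ?_, Y.image g, ⟨Y, hY, rfl⟩, ?_⟩
  · exact card_eq_four.2 ⟨_, _, _, _, disjoint_iff_ne.1 d12 _ y1 _ y2,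
      disjoint_iff_ne.1 d13 _ y1 _ y3, disjoint_iff_ne.1 d14 _ y1 _ y4,
      disjoint_iff_ne.1 d23 _ y2 _ y3, disjoint_iff_ne.1 d24 _ y2 _ y4,
      disjoint_iff_ne.1 d34 _ y3 _ y4, rfl⟩
  · simpa only [image_insert, image_singleton] using image_subset_image hxY

theorem Finset.image_update_id {α : Type} [DecidableEq α] (Y : Finset α) (a b : α) :
    Y.image (Function.update id b a) = if b ∈ Y then insert a (Y.erase b) else Y := by
  ext x
  split_ifs <;> simp only [mem_image, mem_insert, mem_erase, Function.update_apply, id_eq] <;>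
    grind

theorem Finset.mapsTo_update_id_erase {α : Type} [DecidableEq α] {X : Finset α} {a b : α}
    (ha : a ∈ X) (hab : a ≠ b) : Set.MapsTo (Function.update id b a) X (X.erase b) := by
  intro x hx
  by_cases hxb : x = b
  · rw [hxb, Function.update_self]
    exact mem_erase.2 ⟨hab, ha⟩
  · rw [Function.update_of_ne hxb]
    exact mem_erase.2 ⟨hxb, hx⟩

theorem Finset.surjOn_update_id_erase {α : Type} [DecidableEq α] (X : Finset α) (a b : α) :
    Set.SurjOn (Function.update id b a) X (X.erase b) := by
  intro y hy
  obtain ⟨hyb, hyX⟩ := mem_erase.1 hy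
  exact ⟨y, hyX, by simp [Function.update_of_ne hyb]⟩

theorem fourWayPartitionProperty_relabel_general {α : Type} [DecidableEq α]
    (X : Finset α) (a b : α) (ha : a ∈ X) (hab : a ≠ b)
    (S : Set (Finset α))
    (hfour : FourWayPartitionProperty X S) :
    FourWayPartitionProperty (X.erase b)
      ((fun Y : Finset α => if b ∈ Y then insert a (Y.erase b) else Y) '' S) := by
  have relabel_eq_image : (fun Y : Finset α => if b ∈ Y then insert a (Y.erase b) else Y) =
      Finset.image (Function.update id b a) := funext fun Y => (Y.image_update_id a b).symm
  rw [relabel_eq_image]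
  exact hfour.image (mapsTo_update_id_erase ha hab) (surjOn_update_id_erase X a b)

/-- relabeling `b` as `a` preserves the four-way partition property
(passing from `X` to `X' = X − {b}` and from `S` to the relabeled collection `S'`). -/
theorem fourWayPartitionProperty_relabel {α : Type} [DecidableEq α]
    (X : Finset α) (a b : α) (ha : a ∈ X) (hb : b ∈ X) (hab : a ≠ b)
    (S : Set (Finset α)) (hS : ∀ Y ∈ S, Y ⊆ X)
    (hX' : 4 ≤ (X.erase b).card)
    (hfour : FourWayPartitionProperty X S) :
    FourWayPartitionProperty (X.erase b)
      ((fun Y : Finset α => if b ∈ Y then insert a (Y.erase b) else Y) '' S) :=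
  fourWayPartitionProperty_relabel_general X a b ha hab S hfour
end

section
/- Let X be a finite set with |X| ≥ 4, and let S be a collection of subsets of X satisfying the four-way partition property for X. Let T and T' be binary phylogenetic X-trees that resolve every quartet q ∈ Q_S identically, and let a, b ∈ X be distinct. Then the leaves labeled a and b form a cherry of T if and only if they form a cherry of T'. -/
/-!
If `{a, b}` is a cherry of `T`, then `T` resolves `ab|cd` for any two further leaves `c, d`.
Suppose `{a, b}` is not a cherry of `T'`. Then the `a`–`b` path of `T'` has at least three
edges, `a, v₁, v₂, v₃, …, b`, and deleting the edge `v₁v₂` splits the leaves other than `a, b`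
into those on the side of `v₁` and those on the side of `v₂`. Both classes are nonempty, since
beyond the third neighbour of `v₁` (resp. `v₂`) there is a leaf. The four-way partition property
for `{a}`, `{b}` and these two classes gives `c, d` on opposite sides with `{a, b, c, d} ∈ Q_S`.
But the `c`–`d` path of `T'` must cross the edge `v₁v₂`, so it meets the `a`–`b` path at `v₁`,
and `T'` does not resolve `ab|cd`.
-/

namespace SimpleGraph

variable {V : Type*} {G : SimpleGraph V}

lemma Walk.IsPath.exists_adj_adj_of_mem_support {u w v : V} {p : G.Walk u w} (hp : p.IsPath)
    (hv : v ∈ p.support) (hvu : v ≠ u) (hvw : v ≠ w) :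
    ∃ x y, x ≠ y ∧ G.Adj v x ∧ G.Adj v y ∧ x ∈ p.support ∧ y ∈ p.support := by
  obtain ⟨i, rfl, hi⟩ := Walk.mem_support_iff_exists_getVert.mp hv
  have hi0 : i ≠ 0 := by rintro rfl; simp at hvu
  have hil : i ≠ p.length := by rintro rfl; simp at hvw
  have hprev := p.adj_getVert_succ (i := i - 1) (by omega)
  rw [Nat.sub_add_cancel (Nat.pos_of_ne_zero hi0)] at hprev
  refine ⟨p.getVert (i - 1), p.getVert (i + 1), fun h => ?_, hprev.symm,
    p.adj_getVert_succ (by omega), p.getVert_mem_support _, p.getVert_mem_support _⟩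
  have := hp.getVert_injOn (by simp; omega) (by simp; omega) h
  omega

theorem IsAcyclic.exists_isPath_append_ncard_le_one [Fintype V] (hG : G.IsAcyclic) {u v : V}
    {p : G.Walk u v} (hp : p.IsPath) :
    ∃ (w : V) (q : G.Walk v w), (p.append q).IsPath ∧ (G.neighborSet w).ncard ≤ 1 := by
  by_cases hv : (G.neighborSet v).ncard ≤ 1
  · exact ⟨v, .nil, by simpa using hp, hv⟩
  obtain ⟨n, hn, hnp⟩ : ∃ n, G.Adj v n ∧ n ∉ p.support := by
    obtain ⟨x, y, hx, hy, hxy⟩ := (Set.one_lt_ncard_iff (Set.toFinite _)).mp (not_le.mp hv)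
    by_contra! h
    exact hxy ((hG.eq_penultimate_of_adj_end hp hx (h x hx)).trans
      (hG.eq_penultimate_of_adj_end hp hy (h y hy)).symm)
  obtain ⟨w, q, hq, hw⟩ := hG.exists_isPath_append_ncard_le_one (hp.concat hnp hn)
  exact ⟨w, .cons hn q, by rwa [Walk.concat_append] at hq, hw⟩
termination_by Fintype.card V - p.length
decreasing_by
  have := hp.length_lt
  simp only [Walk.length_concat]
  omega

lemma IsAcyclic.eq_of_isPath (hG : G.IsAcyclic) {u w : V} {p q : G.Walk u w} (hp : p.IsPath)
    (hq : q.IsPath) : p = q :=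
  congrArg Subtype.val ((hG.subsingleton_path u w).elim ⟨p, hp⟩ ⟨q, hq⟩)

lemma IsAcyclic.eq_of_isPath_cons (hG : G.IsAcyclic) {u z z' w : V} {h : G.Adj u z}
    {h' : G.Adj u z'} {r : G.Walk z w} {r' : G.Walk z' w} (hp : (Walk.cons h r).IsPath)
    (hp' : (Walk.cons h' r').IsPath) : z = z' := by
  simpa using congrArg Walk.snd (hG.eq_of_isPath hp hp')

lemma Walk.IsPath.reachable_deleteEdges_of_cons {u z y w : V} {h : G.Adj u z} {r : G.Walk z w}
    (hp : (Walk.cons h r).IsPath) (hzy : z ≠ y) : (G.deleteEdges {s(u, y)}).Reachable u w := by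
  refine ((Walk.cons h r).toDeleteEdge _ ?_).reachable
  rw [Walk.edges_cons, List.mem_cons, not_or]
  exact ⟨by rw [Sym2.congr_right]; exact hzy.symm,
    fun he => ((Walk.cons_isPath_iff _ _).mp hp).2 (r.fst_mem_support_of_mem_edges he)⟩

end SimpleGraph

lemma FourWayPartitionProperty.exists_mem_QSet {α : Type} [DecidableEq α] {X : Finset α}
    {S : Set (Finset α)} (hfour : FourWayPartitionProperty X S) {a b c d : α} (ha : a ∈ X)
    (hb : b ∈ X) (hab : a ≠ b) (P : α → Prop) (hc : c ∈ X) (hca : c ≠ a) (hcb : c ≠ b)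
    (hPc : P c) (hd : d ∈ X) (hda : d ≠ a) (hdb : d ≠ b) (hPd : ¬ P d) :
    ∃ c' ∈ X, ∃ d' ∈ X, c' ≠ a ∧ c' ≠ b ∧ d' ≠ a ∧ d' ≠ b ∧ P c' ∧ ¬ P d' ∧
      ({a, b, c', d'} : Finset α) ∈ QSet S := by
  classical
  set Y := (X.erase a).erase b
  obtain ⟨a', ha', b', hb', c', hc', d', hd', hQ⟩ := hfour {a} {b} (Y.filter P)
    (Y.filter (¬ P ·)) (by simp) (by simp) ⟨c, by simp [Y, *]⟩ ⟨d, by simp [Y, *]⟩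
    (by simp [hab]) (by simp [Y]) (by simp [Y]) (by simp [Y]) (by simp [Y])
    (Finset.disjoint_filter_filter_not _ _ _) (by ext x; by_cases P x <;> grind)
  simp only [Finset.mem_singleton, Finset.mem_filter, Finset.mem_erase, Y] at ha' hb' hc' hd'
  subst ha' hb'
  obtain ⟨⟨hc'b, hc'a, hc'⟩, hPc'⟩ := hc'
  obtain ⟨⟨hd'b, hd'a, hd'⟩, hPd'⟩ := hd'
  exact ⟨c', hc', d', hd', hc'a, hc'b, hd'a, hd'b, hPc', hPd', hQ⟩

namespace PhyloTree

open SimpleGraph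

attribute [local instance] PhyloTree.fintypeV

section

variable {α : Type} {X : Finset α} (T : PhyloTree X)

lemma leaf_ne_leaf_s7 {x y : α} (hx : x ∈ X) (hy : y ∈ X) (hxy : x ≠ y) :
    T.leaf x ≠ T.leaf y :=
  fun h => hxy (T.leaf_inj x hx y hy h)

lemma eq_of_adj_leaf {x : α} (hx : x ∈ X) {m m' : T.V} (hm : T.G.Adj (T.leaf x) m)
    (hm' : T.G.Adj (T.leaf x) m') : m = m' :=
  (Set.ncard_le_one_iff (Set.toFinite _)).mp (T.leaf_degree x hx).le hm hm'

lemma ncard_neighborSet_eq_three {v x y : T.V} (hx : T.G.Adj v x) (hy : T.G.Adj v y)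
    (hxy : x ≠ y) : (T.G.neighborSet v).ncard = 3 :=
  T.internal_degree v fun _ hz hzv => hxy (T.eq_of_adj_leaf hz (hzv ▸ hx) (hzv ▸ hy))

lemma exists_adj_ne_ne {v x y : T.V} (hx : T.G.Adj v x) (hy : T.G.Adj v y) (hxy : x ≠ y) :
    ∃ z, T.G.Adj v z ∧ z ≠ x ∧ z ≠ y := by
  by_contra! h
  have hsub : T.G.neighborSet v ⊆ {x, y} := fun z hz => by
    by_cases hzx : z = x
    · simp [hzx]
    · simp [h z hz hzx]
  have := Set.ncard_le_ncard hsub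
  rw [T.ncard_neighborSet_eq_three hx hy hxy, Set.ncard_pair hxy] at this
  omega

lemma eq_or_eq_or_eq_of_adj {v x y z w : T.V} (hx : T.G.Adj v x) (hy : T.G.Adj v y)
    (hz : T.G.Adj v z) (hxy : x ≠ y) (hxz : x ≠ z) (hyz : y ≠ z) (hw : T.G.Adj v w) :
    w = x ∨ w = y ∨ w = z := by
  have hN : {x, y, z} = T.G.neighborSet v :=
    Set.eq_of_subset_of_ncard_le (by simp [Set.insert_subset_iff, hx, hy, hz])
      (by rw [T.ncard_neighborSet_eq_three hx hy hxy,
        Set.ncard_eq_three.mpr ⟨x, y, z, hxy, hxz, hyz, rfl⟩])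
  have hw' : w ∈ T.G.neighborSet v := hw
  simpa [← hN] using hw'

lemma leaf_eq_or_eq_of_mem_support {u w : T.V} {p : T.G.Walk u w} (hp : p.IsPath) {x : α}
    (hx : x ∈ X) (h : T.leaf x ∈ p.support) : T.leaf x = u ∨ T.leaf x = w := by
  by_contra! hne
  obtain ⟨m, m', hmm', hm, hm', -, -⟩ := hp.exists_adj_adj_of_mem_support h hne.1 hne.2
  exact hmm' (T.eq_of_adj_leaf hx hm hm')

lemma not_adj_leaf_leaf_s7 {a b c : α} (ha : a ∈ X) (hb : b ∈ X) (hc : c ∈ X) (hab : a ≠ b)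
    (hac : a ≠ c) (hbc : b ≠ c) : ¬ T.G.Adj (T.leaf a) (T.leaf b) := by
  intro hadj
  obtain ⟨p, hp⟩ := T.connected.exists_isPath (T.leaf c) (T.leaf a)
  have hpen : p.penultimate = T.leaf b := T.eq_of_adj_leaf ha
    (p.adj_penultimate (Walk.not_nil_of_ne (T.leaf_ne_leaf_s7 hc ha hac.symm))).symm hadj
  rcases T.leaf_eq_or_eq_of_mem_support hp hb (hpen ▸ p.getVert_mem_support _) with h | h
  exacts [T.leaf_ne_leaf_s7 hb hc hbc h, T.leaf_ne_leaf_s7 hb ha hab.symm h]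

lemma exists_isPath_cons_cons_cons {a b c : α} (ha : a ∈ X) (hb : b ∈ X) (hc : c ∈ X)
    (hab : a ≠ b) (hac : a ≠ c) (hbc : b ≠ c) (hch : ¬ T.IsCherry a b) :
    ∃ (v₁ v₂ v₃ : T.V) (h₁ : T.G.Adj (T.leaf a) v₁) (h₂ : T.G.Adj v₁ v₂)
      (h₃ : T.G.Adj v₂ v₃) (q : T.G.Walk v₃ (T.leaf b)),
      (Walk.cons h₁ (.cons h₂ (.cons h₃ q))).IsPath := by
  obtain ⟨p, hp⟩ := T.connected.exists_isPath (T.leaf a) (T.leaf b)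
  obtain ⟨v₁, h₁, p, rfl⟩ := p.exists_eq_cons_of_ne (T.leaf_ne_leaf_s7 ha hb hab)
  obtain ⟨v₂, h₂, p, rfl⟩ := p.exists_eq_cons_of_ne (by
    rintro rfl
    exact T.not_adj_leaf_leaf_s7 ha hb hc hab hac hbc h₁)
  obtain ⟨v₃, h₃, p, rfl⟩ := p.exists_eq_cons_of_ne (by
    rintro rfl
    exact hch ⟨v₁, h₁, h₂.symm⟩)
  exact ⟨_, _, _, _, _, _, _, hp⟩

lemma exists_isPath_cons_leaf {u z : T.V} (h : T.G.Adj u z) :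
    ∃ c ∈ X, ∃ r : T.G.Walk z (T.leaf c), (Walk.cons h r).IsPath := by
  obtain ⟨w, q, hq, hw⟩ := T.acyclic.exists_isPath_append_ncard_le_one (Walk.IsPath.of_adj h)
  rw [Adj.toWalk, Walk.cons_append, Walk.nil_append] at hq
  have hdeg : (T.G.neighborSet w).ncard = 1 :=
    le_antisymm hw <| (Set.ncard_pos (Set.toFinite _)).mpr
      ⟨_, ((Walk.cons h q).adj_penultimate Walk.not_nil_cons).symm⟩
  obtain ⟨c, hc, rfl⟩ := T.degree_one_is_leaf w hdeg
  exact ⟨c, hc, q, hq⟩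

lemma exists_leaf_ne_ne_reachable_deleteEdges {u x y : T.V} (hx : T.G.Adj u x)
    (hy : T.G.Adj u y) (hxy : x ≠ y) {a b : α} {pa : T.G.Walk x (T.leaf a)}
    {pb : T.G.Walk y (T.leaf b)} (hpa : (Walk.cons hx pa).IsPath)
    (hpb : (Walk.cons hy pb).IsPath) :
    ∃ c ∈ X, c ≠ a ∧ c ≠ b ∧ (T.G.deleteEdges {s(u, x)}).Reachable u (T.leaf c) ∧
      (T.G.deleteEdges {s(u, y)}).Reachable u (T.leaf c) := by
  obtain ⟨z, hz, hzx, hzy⟩ := T.exists_adj_ne_ne hx hy hxy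
  obtain ⟨c, hc, r, hr⟩ := T.exists_isPath_cons_leaf hz
  refine ⟨c, hc, ?_, ?_, hr.reachable_deleteEdges_of_cons hzx,
    hr.reachable_deleteEdges_of_cons hzy⟩
  · rintro rfl
    exact hzx (T.acyclic.eq_of_isPath_cons hr hpa)
  · rintro rfl
    exact hzy (T.acyclic.eq_of_isPath_cons hr hpb)

variable {T}

lemma IsCherry.resolvesAs {a b c d : α} (hch : T.IsCherry a b) (ha : a ∈ X) (hb : b ∈ X)
    (hc : c ∈ X) (hd : d ∈ X) (hab : a ≠ b) (hac : a ≠ c) (had : a ≠ d) (hbc : b ≠ c)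
    (hbd : b ≠ d) : T.ResolvesAs a b c d := by
  obtain ⟨v, hav, hbv⟩ := hch
  have hlab := T.leaf_ne_leaf_s7 ha hb hab
  obtain ⟨q, hq⟩ := T.connected.exists_isPath (T.leaf c) (T.leaf d)
  have hleaf : ∀ x ∈ X, x ≠ c → x ≠ d → T.leaf x ∉ q.support := fun x hx hxc hxd h =>
    (T.leaf_eq_or_eq_of_mem_support hq hx h).elim (T.leaf_ne_leaf_s7 hx hc hxc)
      (T.leaf_ne_leaf_s7 hx hd hxd)
  have hv : v ∉ q.support := by
    intro h
    have hv_ne : ∀ x ∈ X, v ≠ T.leaf x := fun x hx hvx =>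
      hlab (T.eq_of_adj_leaf hx (hvx ▸ hav.symm) (hvx ▸ hbv.symm))
    obtain ⟨n, n', hnn', hn, hn', hnq, hn'q⟩ :=
      hq.exists_adj_adj_of_mem_support h (hv_ne c hc) (hv_ne d hd)
    have hna : n ≠ T.leaf a := fun e => hleaf a ha hac had (e ▸ hnq)
    have hnb : n ≠ T.leaf b := fun e => hleaf b hb hbc hbd (e ▸ hnq)
    rcases T.eq_or_eq_or_eq_of_adj hav.symm hbv.symm hn hlab hna.symm hnb.symm hn' with e | e | e
    exacts [hleaf a ha hac had (e ▸ hn'q), hleaf b hb hbc hbd (e ▸ hn'q), hnn' e.symm]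
  refine ⟨.cons hav (.cons hbv.symm .nil), q, ?_, hq, ?_⟩
  · simp [Walk.isPath_def, hlab, hav.ne, hbv.ne']
  · simp only [Walk.support_cons, Walk.support_nil, List.mem_cons, List.not_mem_nil, or_false]
    rintro u (rfl | rfl | rfl)
    exacts [hleaf a ha hac had, hv, hleaf b hb hbc hbd]

end

variable {α : Type} [DecidableEq α] {X : Finset α}

theorem IsCherry.of_resolveIdentically {S : Set (Finset α)} (hX : 2 < X.card)
    (hfour : FourWayPartitionProperty X S) {T T' : PhyloTree X}
    (hres : ∀ q ∈ QSet S, T.ResolveIdentically T' q) {a b : α} (ha : a ∈ X) (hb : b ∈ X)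
    (hab : a ≠ b) (hch : T.IsCherry a b) : T'.IsCherry a b := by
  by_contra hch'
  obtain ⟨c₀, hc₀, hc₀ab⟩ := Finset.exists_mem_notMem_of_card_lt_card
    ((Finset.card_le_two (a := a) (b := b)).trans_lt hX)
  obtain ⟨v₁, v₂, v₃, h₁, h₂, h₃, p, hp⟩ :=
    T'.exists_isPath_cons_cons_cons ha hb hc₀ hab (by grind) (by grind) hch'
  obtain ⟨⟨-, hav₂, -⟩, ⟨-, hv₁p⟩, -⟩ := by
    simpa only [Walk.support_cons, List.nodup_cons, List.mem_cons, not_or] using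
      hp.support_nodup
  have hv₁v₃ : v₁ ≠ v₃ := fun e => hv₁p (e ▸ p.start_mem_support)
  have hv₂a : (Walk.cons h₂.symm (.cons h₁.symm .nil)).IsPath := by
    simp [Walk.isPath_def, h₁.ne', h₂.ne', Ne.symm hav₂]
  set H := T'.G.deleteEdges {s(v₁, v₂)}
  have hcut : ¬ H.Reachable v₁ v₂ := isAcyclic_iff_forall_adj_isBridge.mp T'.acyclic h₂
  obtain ⟨c, hc, hca, hcb, -, hcv₁⟩ := T'.exists_leaf_ne_ne_reachable_deleteEdges
    h₁.symm h₂ hav₂ (pa := .nil) (Walk.IsPath.of_adj h₁.symm) hp.tail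
  obtain ⟨d, hd, hda, hdb, hdv₂, -⟩ := T'.exists_leaf_ne_ne_reachable_deleteEdges
    h₂.symm h₃ hv₁v₃ hv₂a hp.tail.tail
  rw [Sym2.eq_swap] at hdv₂
  obtain ⟨c', hc', d', hd', hc'a, hc'b, hd'a, hd'b, hc'v₁, hd'v₁, hQ⟩ :=
    hfour.exists_mem_QSet ha hb hab (fun x => H.Reachable (T'.leaf x) v₁) hc hca hcb hcv₁.symm
      hd hda hdb fun h => hcut (hdv₂.trans h).symm
  obtain ⟨P, Q, hP, hQ, hPQ⟩ := (hres _ hQ a b c' d' rfl).mp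
    (hch.resolvesAs ha hb hc' hd' hab hc'a.symm hd'a.symm hc'b.symm hd'b.symm)
  have hv₁P : v₁ ∈ P.support := by
    rw [T'.acyclic.eq_of_isPath hP hp]
    simp
  have hv₁Q : v₁ ∈ Q.support := by
    by_contra hv₁Q
    have hc'd' : H.Reachable (T'.leaf c') (T'.leaf d') :=
      (Q.toDeleteEdge _ fun he => hv₁Q (Q.fst_mem_support_of_mem_edges he)).reachable
    exact hd'v₁ (hc'd'.symm.trans hc'v₁)
  exact hPQ v₁ hv₁P hv₁Q

end PhyloTree

theorem cherry_iff_cherry_general {α : Type} [DecidableEq α]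
    (X : Finset α) (hX : 4 ≤ X.card)
    (S : Set (Finset α))
    (hfour : FourWayPartitionProperty X S)
    (T T' : PhyloTree X)
    (hres : ∀ q ∈ QSet S, PhyloTree.ResolveIdentically T T' q)
    (a b : α) (ha : a ∈ X) (hb : b ∈ X) (hab : a ≠ b) :
    T.IsCherry a b ↔ T'.IsCherry a b :=
  ⟨PhyloTree.IsCherry.of_resolveIdentically (by omega) hfour hres ha hb hab,
    PhyloTree.IsCherry.of_resolveIdentically (by omega) hfour
      (fun q hq a b c d h => (hres q hq a b c d h).symm) ha hb hab⟩

/-- under the four-way partition property, two trees resolving every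
quartet of `Q_S` identically have exactly the same cherries. -/
theorem cherry_iff_cherry {α : Type} [DecidableEq α]
    (X : Finset α) (hX : 4 ≤ X.card)
    (S : Set (Finset α)) (hS : ∀ Y ∈ S, Y ⊆ X)
    (hfour : FourWayPartitionProperty X S)
    (T T' : PhyloTree X)
    (hres : ∀ q ∈ QSet S, PhyloTree.ResolveIdentically T T' q)
    (a b : α) (ha : a ∈ X) (hb : b ∈ X) (hab : a ≠ b) :
    T.IsCherry a b ↔ T'.IsCherry a b :=
  cherry_iff_cherry_general X hX S hfour T T' hres a b ha hb hab
end

section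
/- Let X be a finite set with |X| ≥ 4, and let T and T' be binary phylogenetic X-trees. If T and T' resolve every 4-element subset of X identically, then T and T' are label-isomorphic. -/
/-!
Betweenness is taken metrically, `d a v + d v b = d a b`; in a tree these are the vertices of the
path from `a` to `b`, and any three vertices have a unique median.

Root both trees at the leaf labelled `r`. The cluster of a vertex `v` is the set of labels whose
leaves lie below `v`. Since inner vertices have degree `3`, `u` lies above `v` exactly when the
cluster of `v` is contained in that of `u`, so a vertex is determined by its cluster. Every vertex
is the median of the root and two leaves `p`, `q`, and a leaf `x` lies below it iff replacing `q` or
`p` by `x` does not move the median. In a binary tree `ab|cd` holds iff `a`, `b`, `c` and `a`, `b`,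
`d` have the same median, so the clusters of both trees coincide. Matching vertices with equal
clusters is then an isomorphism of the rooted orders, hence of the trees, because adjacency is the
covering relation of the rooted order.
-/

lemma Set.exists_mem_ne_ne_of_two_lt_ncard {β : Type*} {s : Set β} (hs : 2 < s.ncard) (a b : β) :
    ∃ c ∈ s, c ≠ a ∧ c ≠ b := by
  by_contra! h
  have hsub : s ⊆ {a, b} := fun c hc => by
    by_cases hca : c = a
    · exact Or.inl hca
    · exact Or.inr (h c hc hca)
  have := (Set.ncard_le_ncard hsub).trans (Set.ncard_insert_le a {b})
  rw [Set.ncard_singleton] at this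
  omega

namespace SimpleGraph

variable {V : Type*} {G : SimpleGraph V} {a b c d m u v w x y : V}

def Btw (G : SimpleGraph V) (a v b : V) : Prop := G.dist a v + G.dist v b = G.dist a b

lemma btw_self_left (a b : V) : G.Btw a a b := by simp [Btw]

lemma btw_self_right (a b : V) : G.Btw a b b := by simp [Btw]

lemma Btw.symm (h : G.Btw a v b) : G.Btw b v a := by
  unfold Btw at *
  rw [dist_comm, add_comm, dist_comm (u := v), dist_comm (u := b)]
  exact h

namespace Connected

variable (hG : G.Connected)
include hG

lemma btw_self_iff : G.Btw a v a ↔ v = a := by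
  refine ⟨fun h => ?_, fun h => h ▸ btw_self_left v v⟩
  unfold Btw at h
  rw [dist_self] at h
  exact ((hG.dist_eq_zero_iff).mp (by omega)).symm

lemma btw_trans_left (h₁ : G.Btw a v b) (h₂ : G.Btw a u v) : G.Btw a u b := by
  unfold Btw at *
  have := hG.dist_triangle (u := a) (v := u) (w := b)
  have := hG.dist_triangle (u := u) (v := v) (w := b)
  omega

lemma btw_trans_left_right (h₁ : G.Btw a v b) (h₂ : G.Btw a u v) : G.Btw u v b := by
  unfold Btw at *
  have := hG.dist_triangle (u := a) (v := u) (w := b)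
  have := hG.dist_triangle (u := u) (v := v) (w := b)
  omega

lemma btw_trans_right (h₁ : G.Btw a v b) (h₂ : G.Btw v u b) : G.Btw a u b :=
  (btw_trans_left hG h₁.symm h₂.symm).symm

lemma btw_trans_right_left (h₁ : G.Btw a v b) (h₂ : G.Btw v u b) : G.Btw a v u :=
  (btw_trans_left_right hG h₁.symm h₂.symm).symm

lemma eq_of_btw_of_btw (h₁ : G.Btw a u v) (h₂ : G.Btw a v u) : u = v := by
  unfold Btw at *
  rw [dist_comm (u := v)] at h₂
  exact (hG.dist_eq_zero_iff).mp (by omega)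

lemma exists_adj_btw (h : v ≠ x) : ∃ n, G.Adj v n ∧ G.Btw v n x := by
  obtain ⟨p, -, hp⟩ := hG.exists_path_of_dist v x
  cases p with
  | nil => exact absurd rfl h
  | @cons _ n _ hadj q =>
    refine ⟨n, hadj, ?_⟩
    have := dist_le q
    have := hG.dist_triangle (u := v) (v := n) (w := x)
    rw [Walk.length_cons] at hp
    unfold Btw
    rw [dist_eq_one_iff_adj.mpr hadj] at *
    omega

lemma ne_of_btw_of_btw {n n' : V} (h : G.Btw x v y) (hn : G.Adj v n) (hnx : G.Btw v n x)
    (hn' : G.Adj v n') (hny : G.Btw v n' y) : n ≠ n' := by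
  rintro rfl
  unfold Btw at *
  have := hG.dist_triangle (u := x) (v := n) (w := y)
  have := G.dist_comm (u := x) (v := v)
  have := G.dist_comm (u := x) (v := n)
  rw [dist_eq_one_iff_adj.mpr hn] at *
  omega

lemma btw_of_btw_of_btw_of_btw (hv : G.Btw a v m) (hc : G.Btw a m c) (hd : G.Btw a m d)
    (hcd : G.Btw c v d) : G.Btw c m d := by
  unfold Btw at *
  have := hG.dist_triangle (u := a) (v := v) (w := c)
  have := hG.dist_triangle (u := a) (v := v) (w := d)
  have := hG.dist_triangle (u := c) (v := m) (w := d)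
  have := G.dist_comm (u := c) (v := v)
  have := G.dist_comm (u := c) (v := m)
  omega

end Connected

def IsMedian (G : SimpleGraph V) (a b c m : V) : Prop :=
  G.Btw a m b ∧ G.Btw a m c ∧ G.Btw b m c

/-- Junk unless a median exists, which it does in a tree (`IsTree.isMedian_median`). -/
noncomputable def median (G : SimpleGraph V) (a b c : V) : V :=
  @Classical.epsilon V ⟨a⟩ (G.IsMedian a b c)

namespace IsTree

variable (hG : G.IsTree)
include hG

lemma length_eq_dist {p : G.Walk a b} (hp : p.IsPath) : p.length = G.dist a b := by
  obtain ⟨q, hq, hlen⟩ := hG.connected.exists_path_of_dist a b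
  rw [← hlen, Subtype.mk.inj ((hG.isAcyclic.subsingleton_path a b).elim ⟨p, hp⟩ ⟨q, hq⟩)]

lemma mem_support_iff_btw {p : G.Walk a b} (hp : p.IsPath) : v ∈ p.support ↔ G.Btw a v b := by
  constructor
  · intro hv
    obtain ⟨q, r, hq, hr, rfl⟩ := hp.mem_support_iff_exists_append.mp hv
    unfold Btw
    rw [← hG.length_eq_dist hq, ← hG.length_eq_dist hr, ← hG.length_eq_dist hp,
      Walk.length_append]
  · intro hv
    obtain ⟨q, -, hq⟩ := hG.connected.exists_path_of_dist a v
    obtain ⟨r, -, hr⟩ := hG.connected.exists_path_of_dist v b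
    have hqr : (q.append r).IsPath := by
      apply Walk.isPath_of_length_eq_dist
      rw [Walk.length_append, hq, hr]
      exact hv
    rw [Subtype.mk.inj ((hG.isAcyclic.subsingleton_path a b).elim ⟨p, hp⟩ ⟨_, hqr⟩),
      Walk.mem_support_append_iff]
    exact Or.inl q.end_mem_support

lemma btw_or_btw (h : G.Btw a v c) (b : V) : G.Btw a v b ∨ G.Btw b v c := by
  classical
  obtain ⟨p, hp, -⟩ := hG.connected.exists_path_of_dist a b
  obtain ⟨q, hq, -⟩ := hG.connected.exists_path_of_dist b c
  have hv := (hG.mem_support_iff_btw (p.append q).bypass_isPath).mpr h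
  rcases (Walk.mem_support_append_iff p q).mp (Walk.support_bypass_subset_support _ hv) with
    hv | hv
  · exact Or.inl ((hG.mem_support_iff_btw hp).mp hv)
  · exact Or.inr ((hG.mem_support_iff_btw hq).mp hv)

lemma btw_or_btw_of_btw (hu : G.Btw a u b) (hv : G.Btw a v b) : G.Btw a u v ∨ G.Btw a v u := by
  refine (hG.btw_or_btw hu v).imp id fun h => ?_
  unfold Btw at *
  omega

lemma eq_of_btw_of_dist_eq (hu : G.Btw a u b) (hv : G.Btw a v b) (h : G.dist a u = G.dist a v) :
    u = v := by
  rcases hG.btw_or_btw_of_btw hu hv with h' | h' <;> unfold Btw at h'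
  · exact (hG.connected.dist_eq_zero_iff).mp (by omega)
  · exact ((hG.connected.dist_eq_zero_iff).mp (by omega)).symm

lemma btw_or_btw_of_adj (hadj : G.Adj x y) (w : V) : G.Btw w x y ∨ G.Btw w y x := by
  obtain ⟨p, hp, -⟩ := hG.connected.exists_path_of_dist w x
  obtain ⟨q, hq, -⟩ := hG.connected.exists_path_of_dist w y
  by_cases hx : x ∈ q.support
  · exact Or.inl ((hG.mem_support_iff_btw hq).mp hx)
  · exact Or.inr ((hG.mem_support_iff_btw hp).mp
      (hG.isAcyclic.mem_support_of_ne_mem_support_of_adj_of_isPath hp hq hadj hx))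

lemma btw_of_forall_btw_eq (h : ∀ u, G.Btw a u m → G.Btw m u b → u = m) : G.Btw a m b := by
  obtain ⟨p, hp, -⟩ := hG.connected.exists_path_of_dist a m
  obtain ⟨q, hq, -⟩ := hG.connected.exists_path_of_dist m b
  have hpq : (p.append q).IsPath := by
    rw [Walk.isPath_def, Walk.support_append, List.nodup_append]
    have hq' := hq.support_nodup
    rw [← Walk.cons_tail_support] at hq'
    refine ⟨hp.support_nodup, (List.nodup_cons.mp hq').2, fun u hu u' hu' hne => ?_⟩
    subst hne
    have hu'' : u ∈ q.support := Walk.cons_tail_support q ▸ List.mem_cons_of_mem _ hu'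
    have := h u ((hG.mem_support_iff_btw hp).mp hu) ((hG.mem_support_iff_btw hq).mp hu'')
    subst this
    exact (List.nodup_cons.mp hq').1 hu'
  exact (hG.mem_support_iff_btw hpq).mp ((Walk.mem_support_append_iff p q).mpr
    (Or.inl p.end_mem_support))

lemma exists_isMedian (a b c : V) : ∃ m, G.IsMedian a b c m := by
  classical
  let P : ℕ → Prop := fun k => ∃ m, G.Btw a m b ∧ G.Btw a m c ∧ G.dist a m = k
  have hP : P 0 := ⟨a, btw_self_left a b, btw_self_left a c, dist_self⟩
  obtain ⟨m, hmb, hmc, hm⟩ := Nat.findGreatest_spec (Nat.zero_le (G.dist a b)) hP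
  refine ⟨m, hmb, hmc, ?_⟩
  refine hG.btw_of_forall_btw_eq fun u hbu hum => ?_
  have hau : G.Btw a m u := hG.connected.btw_trans_right_left hmb hbu.symm
  have hub : G.Btw a u b := hG.connected.btw_trans_right hmb hbu.symm
  have hle : G.dist a u ≤ G.dist a m := by
    rw [hm]
    refine Nat.le_findGreatest ?_ ⟨u, hub, hG.connected.btw_trans_right hmc hum, rfl⟩
    unfold Btw at hub
    omega
  unfold Btw at hau
  exact ((hG.connected.dist_eq_zero_iff).mp (by omega)).symm

lemma isMedian_median (a b c : V) : G.IsMedian a b c (G.median a b c) :=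
  @Classical.epsilon_spec V (G.IsMedian a b c) (hG.exists_isMedian a b c)

lemma eq_of_isMedian {m' : V} (h : G.IsMedian a b c m) (h' : G.IsMedian a b c m') : m = m' := by
  obtain ⟨hab, hac, hbc⟩ := h
  obtain ⟨hab', hac', hbc'⟩ := h'
  have := G.dist_comm (u := m) (v := m')
  have := G.dist_comm (u := m) (v := b)
  have := G.dist_comm (u := m') (v := b)
  rcases hG.btw_or_btw_of_btw hab hab' with h | h <;> unfold Btw at * <;>
    exact (hG.connected.dist_eq_zero_iff).mp (by omega)

lemma eq_median (h : G.IsMedian a b c m) : m = G.median a b c :=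
  hG.eq_of_isMedian h (hG.isMedian_median a b c)

lemma median_comm_left (a b c : V) : G.median b a c = G.median a b c := by
  obtain ⟨h₁, h₂, h₃⟩ := hG.isMedian_median b a c
  exact hG.eq_median ⟨h₁.symm, h₃, h₂⟩

lemma median_comm_right (a b c : V) : G.median a c b = G.median a b c := by
  obtain ⟨h₁, h₂, h₃⟩ := hG.isMedian_median a c b
  exact hG.eq_median ⟨h₂, h₁, h₃.symm⟩

lemma median_self_left (a b : V) : G.median a a b = a :=
  (hG.eq_median ⟨btw_self_left a a, btw_self_left a b, btw_self_left a b⟩).symm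

lemma median_self_middle (a b : V) : G.median a b a = a :=
  (hG.eq_median ⟨btw_self_left a b, btw_self_left a a, btw_self_right b a⟩).symm

lemma median_self_right (a b : V) : G.median a b b = b :=
  (hG.eq_median ⟨btw_self_right a b, btw_self_right a b, btw_self_left b b⟩).symm

lemma btw_median_iff {p q : V} :
    G.Btw a (G.median a p q) x ↔
      G.median a p x = G.median a p q ∨ G.median a q x = G.median a q p := by
  obtain ⟨hap, haq, hpq⟩ := hG.isMedian_median a p q
  refine ⟨fun h => ?_, ?_⟩
  · rcases hG.btw_or_btw hpq x with hpx | hxq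
    · exact Or.inl (hG.eq_median ⟨hap, h, hpx⟩).symm
    · exact Or.inr ((hG.eq_median ⟨haq, h, hxq.symm⟩).symm.trans (hG.median_comm_right a q p))
  · rintro (h | h)
    · exact h ▸ (hG.isMedian_median a p x).2.1
    · rw [hG.median_comm_right a q p, ← h]
      exact (hG.isMedian_median a q x).2.1

lemma btw_of_adj_of_btw {n : V} (hn : G.Adj v n) (hnx : G.Btw v n x) (hmx : G.Btw v m x)
    (hmv : m ≠ v) : G.Btw v n m := by
  rcases hG.btw_or_btw_of_btw hnx hmx with h | h
  · exact h
  · have hvm := (hG.connected.dist_eq_zero_iff (u := v) (v := m)).not.mpr hmv.symm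
    unfold Btw at h
    rw [dist_eq_one_iff_adj.mpr hn] at h
    obtain rfl : m = n := (hG.connected.dist_eq_zero_iff).mp (by omega)
    exact btw_self_right v m

lemma btw_of_adj_of_adj {n n' : V} (hn : G.Adj v n) (hn' : G.Adj v n') (hne : n ≠ n')
    (hnx : G.Btw v n x) (hny : G.Btw v n' y) : G.Btw x v y := by
  obtain ⟨hvx, hvy, hxy⟩ := hG.isMedian_median v x y
  by_cases hmv : G.median v x y = v
  · rwa [hmv] at hxy
  have hny' := hG.connected.btw_trans_left hvy (hG.btw_of_adj_of_btw hn hnx hvx hmv)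
  refine absurd (hG.eq_of_btw_of_dist_eq hny' hny ?_) hne
  rw [dist_eq_one_iff_adj.mpr hn, dist_eq_one_iff_adj.mpr hn']

lemma exists_degree_one_btw [Finite V] (h : u ≠ w) :
    ∃ x, (G.neighborSet x).ncard = 1 ∧ G.Btw w u x := by
  obtain ⟨x, hux, hmax⟩ := Set.exists_max_image {x | G.Btw w u x} (G.dist w) (Set.toFinite _)
    ⟨u, btw_self_right w u⟩
  have hxw : x ≠ w := by
    rintro rfl
    exact h ((hG.connected.btw_self_iff).mp hux)
  obtain ⟨n, hn, hnw⟩ := hG.connected.exists_adj_btw hxw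
  refine ⟨x, ?_, hux⟩
  suffices G.neighborSet x = {n} by rw [this, Set.ncard_singleton]
  refine Set.eq_singleton_iff_unique_mem.mpr ⟨hn, fun y (hy : G.Adj x y) => ?_⟩
  rcases hG.btw_or_btw_of_adj hy w with hxy | hyx
  · have := hmax y (hG.connected.btw_trans_left hxy hux)
    unfold Btw at hxy
    rw [dist_eq_one_iff_adj.mpr hy] at hxy
    omega
  · refine hG.eq_of_btw_of_dist_eq hyx hnw.symm ?_
    unfold Btw at hyx hnw
    rw [dist_eq_one_iff_adj.mpr hy.symm] at hyx
    rw [dist_eq_one_iff_adj.mpr hn, dist_comm (u := n), dist_comm (u := x)] at hnw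
    omega

lemma adj_iff_of_btw {ρ : V} (h : G.Btw ρ u w) :
    G.Adj u w ↔ u ≠ w ∧ ∀ v, G.Btw ρ v w → G.Btw ρ v u ∨ v = w := by
  refine ⟨fun hadj => ⟨hadj.ne, fun v hv => ?_⟩, fun ⟨hne, hmin⟩ => ?_⟩
  · rcases hG.btw_or_btw_of_btw hv h with hvu | huv
    · exact Or.inl hvu
    · have huvw := hG.connected.btw_trans_left_right hv huv
      unfold Btw at huvw
      rw [dist_eq_one_iff_adj.mpr hadj] at huvw
      rcases Nat.eq_zero_or_pos (G.dist u v) with h0 | h0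
      · obtain rfl := (hG.connected.dist_eq_zero_iff).mp h0
        exact Or.inl (btw_self_right ρ u)
      · exact Or.inr ((hG.connected.dist_eq_zero_iff).mp (by omega))
  · obtain ⟨n, hwn, hnu⟩ := hG.connected.exists_adj_btw hne.symm
    rcases hmin n (hG.connected.btw_trans_right h hnu.symm) with hn | rfl
    · obtain rfl := hG.connected.eq_of_btw_of_btw hn
        (hG.connected.btw_trans_right_left h hnu.symm)
      exact hwn.symm
    · exact absurd rfl hwn.ne

lemma not_btw_of_median_eq (h : G.median a b c = G.median a b d)
    (hm : ¬ G.Btw c (G.median a b c) d) (hv : G.Btw a v b) : ¬ G.Btw c v d := by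
  intro hcd
  obtain ⟨hab, hac, hbc⟩ := hG.isMedian_median a b c
  obtain ⟨-, had, hbd⟩ := hG.isMedian_median a b d
  rw [← h] at had hbd
  rcases hG.btw_or_btw_of_btw hv hab with hvm | hmv
  · exact hm (hG.connected.btw_of_btw_of_btw_of_btw hvm hac had hcd)
  · exact hm (hG.connected.btw_of_btw_of_btw_of_btw
      (hG.connected.btw_trans_left_right hv hmv).symm hbc hbd hcd)

lemma exists_isPath_disjoint_iff :
    (∃ (p : G.Walk a b) (q : G.Walk c d),
        p.IsPath ∧ q.IsPath ∧ ∀ v ∈ p.support, v ∉ q.support) ↔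
      ∀ v, G.Btw a v b → ¬ G.Btw c v d := by
  refine ⟨fun ⟨p, q, hp, hq, h⟩ v hv hv' => h v ((hG.mem_support_iff_btw hp).mpr hv)
    ((hG.mem_support_iff_btw hq).mpr hv'), fun h => ?_⟩
  obtain ⟨p, hp, -⟩ := hG.connected.exists_path_of_dist a b
  obtain ⟨q, hq, -⟩ := hG.connected.exists_path_of_dist c d
  exact ⟨p, q, hp, hq, fun v hv hv' => h v ((hG.mem_support_iff_btw hp).mp hv)
    ((hG.mem_support_iff_btw hq).mp hv')⟩

end IsTree

section Iso

variable {V' : Type*} {G' : SimpleGraph V'} {ρ : V} {ρ' : V'}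

lemma IsTree.adj_of_btw_iff (hG : G.IsTree) (hG' : G'.IsTree) (e : V ≃ V')
    (he : ∀ u v, G.Btw ρ u v ↔ G'.Btw ρ' (e u) (e v)) (hadj : G.Adj u w) :
    G'.Adj (e u) (e w) := by
  have key : ∀ {u w}, G.Adj u w → G.Btw ρ u w → G'.Adj (e u) (e w) := fun {u w} hadj h => by
    obtain ⟨hne, hmin⟩ := (hG.adj_iff_of_btw h).mp hadj
    refine (hG'.adj_iff_of_btw ((he u w).mp h)).mpr ⟨e.injective.ne hne, fun v' hv' => ?_⟩
    obtain ⟨v, rfl⟩ := e.surjective v'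
    rw [← he] at hv' ⊢
    exact (hmin v hv').imp_right (congrArg e)
  rcases hG.btw_or_btw_of_adj hadj ρ with h | h
  · exact key hadj h
  · exact (key hadj.symm h).symm

def IsTree.isoOfBtwIff (hG : G.IsTree) (hG' : G'.IsTree) (e : V ≃ V')
    (he : ∀ u v, G.Btw ρ u v ↔ G'.Btw ρ' (e u) (e v)) : G ≃g G' where
  toEquiv := e
  map_rel_iff' {u w} := by
    refine ⟨fun h => ?_, hG.adj_of_btw_iff hG' e he⟩
    have he' : ∀ u v, G'.Btw ρ' u v ↔ G.Btw ρ (e.symm u) (e.symm v) := fun u v => by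
      rw [he, e.apply_symm_apply, e.apply_symm_apply]
    simpa using hG'.adj_of_btw_iff hG e.symm he' h

end Iso

end SimpleGraph

namespace PhyloTree

open SimpleGraph

variable {α : Type} {X : Finset α} (T : PhyloTree X) {a b c d p q r x y z t : α} {u v : T.V}

instance : Fintype T.V := T.fintypeV

lemma isTree_s8 : T.G.IsTree := ⟨T.connected, T.acyclic⟩

noncomputable def median (x y z : α) : T.V := T.G.median (T.leaf x) (T.leaf y) (T.leaf z)

def cluster (r : α) (v : T.V) : Set α := {x | x ∈ X ∧ T.G.Btw (T.leaf r) v (T.leaf x)}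

lemma isMedian_median (x y z : α) :
    T.G.IsMedian (T.leaf x) (T.leaf y) (T.leaf z) (T.median x y z) :=
  T.isTree_s8.isMedian_median _ _ _

lemma median_self_right (x y : α) : T.median x y y = T.leaf y :=
  T.isTree_s8.median_self_right _ _

lemma leaf_ne (hx : x ∈ X) (hy : y ∈ X) (hxy : x ≠ y) : T.leaf x ≠ T.leaf y :=
  fun h => hxy (T.leaf_inj x hx y hy h)

lemma eq_of_btw_leaf {a b : T.V} (hx : x ∈ X) (h : T.G.Btw a (T.leaf x) b) :
    T.leaf x = a ∨ T.leaf x = b := by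
  by_contra! hne
  obtain ⟨na, hna, hnaa⟩ := T.connected.exists_adj_btw hne.1
  obtain ⟨nb, hnb, hnbb⟩ := T.connected.exists_adj_btw hne.2
  obtain ⟨s, hs⟩ := Set.ncard_eq_one.mp (T.leaf_degree x hx)
  have hna' : na ∈ T.G.neighborSet (T.leaf x) := hna
  have hnb' : nb ∈ T.G.neighborSet (T.leaf x) := hnb
  rw [hs, Set.mem_singleton_iff] at hna' hnb'
  exact T.connected.ne_of_btw_of_btw h hna hnaa hnb hnbb (hna'.trans hnb'.symm)

lemma ncard_neighborSet_eq_three_of_btw {a b : T.V} (h : T.G.Btw a v b) (ha : v ≠ a)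
    (hb : v ≠ b) : (T.G.neighborSet v).ncard = 3 :=
  T.internal_degree v fun x hx hxv => by
    subst hxv
    rcases T.eq_of_btw_leaf hx h with h | h
    exacts [ha h, hb h]

lemma leaf_ne_median (hx : x ∈ X) (hy : y ∈ X) (hz : z ∈ X) (hxy : x ≠ y) (hxz : x ≠ z)
    (hyz : y ≠ z) (ht : t ∈ X) : T.leaf t ≠ T.median x y z := by
  intro h
  obtain ⟨h₁, h₂, h₃⟩ := T.isMedian_median x y z
  rw [← h] at h₁ h₂ h₃
  have := T.leaf_ne hx hy hxy
  have := T.leaf_ne hx hz hxz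
  have := T.leaf_ne hy hz hyz
  rcases T.eq_of_btw_leaf ht h₁ with h₁ | h₁ <;> rcases T.eq_of_btw_leaf ht h₂ with h₂ | h₂ <;>
    rcases T.eq_of_btw_leaf ht h₃ with h₃ | h₃ <;> simp_all

lemma exists_btw_leaf {n : T.V} (hn : T.G.Adj v n) : ∃ x ∈ X, T.G.Btw v n (T.leaf x) := by
  obtain ⟨y, hy, hny⟩ := T.isTree_s8.exists_degree_one_btw hn.ne'
  obtain ⟨x, hx, rfl⟩ := T.degree_one_is_leaf y hy
  exact ⟨x, hx, hny⟩

lemma exists_mem_cluster (hr : r ∈ X) (v : T.V) : ∃ x, x ∈ T.cluster r v := by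
  by_cases hv : v = T.leaf r
  · subst hv
    exact ⟨r, hr, btw_self_left _ _⟩
  · obtain ⟨y, hy, hvy⟩ := T.isTree_s8.exists_degree_one_btw hv
    obtain ⟨x, hx, rfl⟩ := T.degree_one_is_leaf y hy
    exact ⟨x, hx, hvy⟩

lemma median_eq_leaf_iff (ha : a ∈ X) (hb : b ∈ X) (hd : d ∈ X) (hab : a ≠ b) :
    T.median a b d = T.leaf a ↔ d = a := by
  refine ⟨fun h => ?_, fun h => h ▸ T.isTree_s8.median_self_middle _ _⟩
  have hbd := (T.isMedian_median a b d).2.2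
  rw [h] at hbd
  rcases T.eq_of_btw_leaf ha hbd with h' | h'
  · exact absurd h' (T.leaf_ne ha hb hab)
  · exact T.leaf_inj d hd a ha h'.symm

lemma median_eq_median_iff_eq (hc : c = a ∨ c = b) (ha : a ∈ X) (hb : b ∈ X) (hd : d ∈ X)
    (hab : a ≠ b) : T.median a b c = T.median a b d ↔ c = d := by
  rcases hc with rfl | rfl
  · rw [show T.median c b c = T.leaf c from T.isTree_s8.median_self_middle _ _, eq_comm,
      T.median_eq_leaf_iff ha hb hd hab, eq_comm]
  · rw [T.median_self_right, eq_comm, show T.median a c d = T.median c a d from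
      (T.isTree_s8.median_comm_left _ _ _).symm, T.median_eq_leaf_iff hb ha hd hab.symm, eq_comm]

lemma not_btw_of_median_eq (ha : a ∈ X) (hb : b ∈ X) (hc : c ∈ X) (hd : d ∈ X) (hab : a ≠ b)
    (hac : a ≠ c) (hbc : b ≠ c) (h : T.median a b c = T.median a b d) :
    ¬ T.G.Btw (T.leaf c) (T.median a b c) (T.leaf d) := by
  -- otherwise the first steps from the median towards `a`, `b`, `c`, `d` are four neighbours
  intro hcd
  set m := T.median a b c
  have hleaf := fun t (ht : t ∈ X) => T.leaf_ne_median ha hb hc hab hac hbc ht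
  have h3 := T.internal_degree m hleaf
  obtain ⟨sab, sac, sbc⟩ := T.isMedian_median a b c
  obtain ⟨-, sad, sbd⟩ := T.isMedian_median a b d
  rw [← h] at sad sbd
  obtain ⟨na, hna, hnaa⟩ := T.connected.exists_adj_btw (hleaf a ha).symm
  obtain ⟨nb, hnb, hnbb⟩ := T.connected.exists_adj_btw (hleaf b hb).symm
  obtain ⟨nc, hnc, hncc⟩ := T.connected.exists_adj_btw (hleaf c hc).symm
  obtain ⟨nd, hnd, hndd⟩ := T.connected.exists_adj_btw (hleaf d hd).symm
  have := (Set.three_lt_ncard (s := T.G.neighborSet m) (Set.toFinite _)).mpr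
    ⟨na, hna, nb, hnb, nc, hnc, nd, hnd,
    T.connected.ne_of_btw_of_btw sab hna hnaa hnb hnbb,
    T.connected.ne_of_btw_of_btw sac hna hnaa hnc hncc,
    T.connected.ne_of_btw_of_btw sad hna hnaa hnd hndd,
    T.connected.ne_of_btw_of_btw sbc hnb hnbb hnc hncc,
    T.connected.ne_of_btw_of_btw sbd hnb hnbb hnd hndd,
    T.connected.ne_of_btw_of_btw hcd hnc hncc hnd hndd⟩
  omega

lemma resolvesAs_iff_median_eq (ha : a ∈ X) (hb : b ∈ X) (hc : c ∈ X) (hd : d ∈ X)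
    (hab : a ≠ b) (hac : a ≠ c) (hbc : b ≠ c) :
    T.ResolvesAs a b c d ↔ T.median a b c = T.median a b d := by
  rw [ResolvesAs, T.isTree_s8.exists_isPath_disjoint_iff]
  refine ⟨fun h => ?_, fun h v hv =>
    T.isTree_s8.not_btw_of_median_eq h (T.not_btw_of_median_eq ha hb hc hd hab hac hbc h) hv⟩
  obtain ⟨sab, sac, sbc⟩ := T.isMedian_median a b c
  refine T.isTree_s8.eq_median ⟨sab, ?_, ?_⟩
  · exact (T.isTree_s8.btw_or_btw sac (T.leaf d)).resolve_right fun h' => h _ sab h'.symm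
  · exact (T.isTree_s8.btw_or_btw sbc (T.leaf d)).resolve_right fun h' => h _ sab h'.symm

lemma exists_median_eq (hr : r ∈ X) (v : T.V) : ∃ p ∈ X, ∃ q ∈ X, T.median r p q = v := by
  by_cases hv : ∃ x ∈ X, T.leaf x = v
  · obtain ⟨x, hx, rfl⟩ := hv
    exact ⟨x, hx, x, hx, T.median_self_right r x⟩
  simp only [not_exists, not_and] at hv
  have h3 := T.internal_degree v hv
  obtain ⟨n₀, hn₀, hn₀r⟩ := T.connected.exists_adj_btw (Ne.symm (hv r hr))
  have h2 : 2 < (T.G.neighborSet v).ncard := by omega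
  obtain ⟨n₁, hn₁, hn₁₀, -⟩ := Set.exists_mem_ne_ne_of_two_lt_ncard h2 n₀ n₀
  obtain ⟨n₂, hn₂, hn₂₀, hn₂₁⟩ := Set.exists_mem_ne_ne_of_two_lt_ncard h2 n₀ n₁
  obtain ⟨p, hp, hn₁p⟩ := T.exists_btw_leaf hn₁
  obtain ⟨q, hq, hn₂q⟩ := T.exists_btw_leaf hn₂
  refine ⟨p, hp, q, hq, (T.isTree_s8.eq_median ⟨?_, ?_, ?_⟩).symm⟩
  · exact T.isTree_s8.btw_of_adj_of_adj hn₀ hn₁ hn₁₀.symm hn₀r hn₁p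
  · exact T.isTree_s8.btw_of_adj_of_adj hn₀ hn₂ hn₂₀.symm hn₀r hn₂q
  · exact T.isTree_s8.btw_of_adj_of_adj hn₁ hn₂ hn₂₁.symm hn₁p hn₂q

lemma exists_mem_cluster_not_mem (hr : r ∈ X) (h : T.G.Btw (T.leaf r) v u) (hvu : v ≠ u) :
    ∃ y ∈ T.cluster r v, y ∉ T.cluster r u := by
  by_cases hvr : v = T.leaf r
  · subst hvr
    exact ⟨r, ⟨hr, btw_self_left _ _⟩,
      fun ⟨_, hu⟩ => hvu ((T.connected.btw_self_iff).mp hu).symm⟩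
  have h3 := T.ncard_neighborSet_eq_three_of_btw h hvr hvu
  obtain ⟨n₀, hn₀, hn₀r⟩ := T.connected.exists_adj_btw hvr
  obtain ⟨n₁, hn₁, hn₁u⟩ := T.connected.exists_adj_btw hvu
  have h2 : 2 < (T.G.neighborSet v).ncard := by omega
  -- a leaf beyond the third neighbour of `v` lies below `v` but not below `u`
  obtain ⟨n, hn, hn₀n, hn₁n⟩ := Set.exists_mem_ne_ne_of_two_lt_ncard h2 n₀ n₁
  obtain ⟨y, hy, hny⟩ := T.exists_btw_leaf hn
  have hry := T.isTree_s8.btw_of_adj_of_adj hn₀ hn hn₀n.symm hn₀r hny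
  refine ⟨y, ⟨hy, hry⟩, fun ⟨_, huy⟩ => ?_⟩
  have hn₁y := T.connected.btw_trans_left (T.connected.btw_trans_left_right huy h) hn₁u
  refine hn₁n (T.isTree_s8.eq_of_btw_of_dist_eq hny hn₁y ?_)
  rw [dist_eq_one_iff_adj.mpr hn, dist_eq_one_iff_adj.mpr hn₁]

lemma btw_iff_cluster_subset (hr : r ∈ X) :
    T.G.Btw (T.leaf r) u v ↔ T.cluster r v ⊆ T.cluster r u := by
  refine ⟨fun h x ⟨hx, hvx⟩ => ⟨hx, T.connected.btw_trans_left hvx h⟩, fun h => ?_⟩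
  obtain ⟨x, hx⟩ := T.exists_mem_cluster hr v
  rcases T.isTree_s8.btw_or_btw_of_btw (h hx).2 hx.2 with huv | hvu
  · exact huv
  by_cases hvu' : v = u
  · exact hvu' ▸ btw_self_right _ _
  obtain ⟨y, hyv, hyu⟩ := T.exists_mem_cluster_not_mem hr hvu hvu'
  exact absurd (h hyv) hyu

lemma cluster_injective (hr : r ∈ X) : Function.Injective (T.cluster r) := fun _ _ h =>
  T.connected.eq_of_btw_of_btw ((T.btw_iff_cluster_subset hr).mpr h.ge)
    ((T.btw_iff_cluster_subset hr).mpr h.le)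

section Transfer

variable [DecidableEq α] {T T' : PhyloTree X}
  (hres : ∀ q : Finset α, q ⊆ X → q.card = 4 → T.ResolveIdentically T' q)
include hres

lemma median_eq_median_iff (ha : a ∈ X) (hb : b ∈ X) (hc : c ∈ X) (hd : d ∈ X) :
    T.median a b c = T.median a b d ↔ T'.median a b c = T'.median a b d := by
  by_cases hab : a = b
  · subst hab
    simp only [median, T.isTree_s8.median_self_left, T'.isTree_s8.median_self_left]
  by_cases hcd : c = d
  · subst hcd
    exact iff_of_true rfl rfl
  by_cases hc' : c = a ∨ c = b
  · rw [T.median_eq_median_iff_eq hc' ha hb hd hab, T'.median_eq_median_iff_eq hc' ha hb hd hab]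
  by_cases hd' : d = a ∨ d = b
  · rw [eq_comm, T.median_eq_median_iff_eq hd' ha hb hc hab, eq_comm (a := T'.median a b c),
      T'.median_eq_median_iff_eq hd' ha hb hc hab]
  simp only [not_or] at hc' hd'
  rw [← T.resolvesAs_iff_median_eq ha hb hc hd hab (Ne.symm hc'.1) (Ne.symm hc'.2),
    ← T'.resolvesAs_iff_median_eq ha hb hc hd hab (Ne.symm hc'.1) (Ne.symm hc'.2)]
  refine hres {a, b, c, d} (by simp [Finset.insert_subset_iff, *]) ?_ a b c d rfl
  rw [Finset.card_insert_of_notMem (by simp [hab, Ne.symm hc'.1, Ne.symm hd'.1]),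
    Finset.card_insert_of_notMem (by simp [Ne.symm hc'.2, Ne.symm hd'.2]), Finset.card_pair hcd]

lemma cluster_median (hr : r ∈ X) (hp : p ∈ X) (hq : q ∈ X) :
    T.cluster r (T.median r p q) = T'.cluster r (T'.median r p q) := by
  ext x
  refine and_congr_right fun hx => ?_
  rw [median, T.isTree_s8.btw_median_iff, median, T'.isTree_s8.btw_median_iff]
  exact or_congr (median_eq_median_iff hres hr hp hx hq) (median_eq_median_iff hres hr hq hx hp)

lemma range_cluster_subset (hr : r ∈ X) :
    Set.range (T.cluster r) ⊆ Set.range (T'.cluster r) := by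
  rintro _ ⟨v, rfl⟩
  obtain ⟨p, hp, q, hq, rfl⟩ := T.exists_median_eq hr v
  exact ⟨_, (cluster_median hres hr hp hq).symm⟩

end Transfer

end PhyloTree

/-- two binary phylogenetic `X`-trees resolving every 4-element subset
of `X` identically are label-isomorphic. -/
theorem labelIso_of_resolve_all_quartets {α : Type} [DecidableEq α]
    (X : Finset α) (hX : 4 ≤ X.card)
    (T T' : PhyloTree X)
    (h : ∀ q : Finset α, q ⊆ X → q.card = 4 → PhyloTree.ResolveIdentically T T' q) :
    PhyloTree.LabelIso T T' := by
  obtain ⟨r, hr⟩ : X.Nonempty := Finset.card_pos.mp (by omega)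
  have h' : ∀ q : Finset α, q ⊆ X → q.card = 4 → T'.ResolveIdentically T q :=
    fun q hq hc a b c d he => (h q hq hc a b c d he).symm
  have hrange : Set.range (T.cluster r) = Set.range (T'.cluster r) :=
    (PhyloTree.range_cluster_subset h hr).antisymm (PhyloTree.range_cluster_subset h' hr)
  let e : T.V ≃ T'.V := (Equiv.ofInjective _ (T.cluster_injective hr)).trans
    ((Equiv.setCongr hrange).trans (Equiv.ofInjective _ (T'.cluster_injective hr)).symm)
  have he : ∀ v, T'.cluster r (e v) = T.cluster r v := fun v => by
    simp [e, Equiv.apply_ofInjective_symm]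
  have hbtw : ∀ u v, T.G.Btw (T.leaf r) u v ↔ T'.G.Btw (T'.leaf r) (e u) (e v) := fun u v => by
    rw [T.btw_iff_cluster_subset hr, T'.btw_iff_cluster_subset hr, he, he]
  refine ⟨T.isTree_s8.isoOfBtwIff T'.isTree_s8 e hbtw, fun x hx => T'.cluster_injective hr ?_⟩
  change T'.cluster r (e (T.leaf x)) = _
  rw [he, ← T.median_self_right r x, PhyloTree.cluster_median h hr hx hx, T'.median_self_right]
end
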